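/- arXiv:2503.04466 — 9 statements merged into one kernel-verified Lean document; each statement's English description precedes it below -/
import Mathlib

section
/- Fix (q, κ, u) ∈ ℝ^d × ℝ^d × ℝ^n. The fiber-derivative map F : ℝ^d × ℝ^d → ℝ^d × ℝ^d of the new control Lagrangian, F(v_q, v_κ) = (p_q, p_κ) with p_q = v_κ + (D_2 X_v(q, v_q, u))ᵀ κ − ∇_{v_q} C(q, v_q, u) and p_κ = v_q, is a bijection whose inverse is the map (p_q, p_κ) ↦ (p_κ, p_q − (D_2 X_v(q, p_κ, u))ᵀ κ + ∇_{v_q} C(q, p_κ, u)); moreover both F and its inverse are C^∞. (This expresses that the new control Lagrangian is hyperregular for every value of the control u.) -/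
open scoped RealInnerProductSpace

noncomputable section

/-- Euclidean space `ℝ^d`. -/
abbrev Ed (d : ℕ) : Type := EuclideanSpace ℝ (Fin d)

/-- For fixed `(q, κ, u)`, the fiber-derivative map of the new control Lagrangian
`L̃(q, κ, v_q, v_κ, u) = ⟪v_κ, v_q⟫ + ⟪κ, X_v(q, v_q, u)⟫ − C(q, v_q, u)`, namely
`F(v_q, v_κ) = (v_κ + (D₂X_v(q,v_q,u))ᵀ κ − ∇_{v_q} C(q,v_q,u), v_q)`, is a bijection,
with the explicitly given inverse, and both the map and its inverse are `C^∞`. -/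
theorem new_control_lagrangian_hyperregular (d n : ℕ)
    (Xv : Ed d → Ed d → Ed n → Ed d)
    (C : Ed d → Ed d → Ed n → ℝ)
    (hXv : ContDiff ℝ (⊤ : ℕ∞) (fun p : (Ed d × Ed d) × Ed n => Xv p.1.1 p.1.2 p.2))
    (hC : ContDiff ℝ (⊤ : ℕ∞) (fun p : (Ed d × Ed d) × Ed n => C p.1.1 p.1.2 p.2))
    (q κ : Ed d) (u : Ed n) :
    let F : Ed d × Ed d → Ed d × Ed d := fun vv =>
      (vv.2 + ContinuousLinearMap.adjoint (fderiv ℝ (fun v => Xv q v u) vv.1) κ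
          - gradient (fun v => C q v u) vv.1,
       vv.1)
    let G : Ed d × Ed d → Ed d × Ed d := fun pp =>
      (pp.2,
       pp.1 - ContinuousLinearMap.adjoint (fderiv ℝ (fun v => Xv q v u) pp.2) κ
          + gradient (fun v => C q v u) pp.2)
    Function.Bijective F ∧ Function.LeftInverse G F ∧ Function.RightInverse G F ∧
      ContDiff ℝ (⊤ : ℕ∞) F ∧ ContDiff ℝ (⊤ : ℕ∞) G := by
  intro F G
  -- auxiliary: the "correction" map is smooth
  have hemb : ContDiff ℝ (⊤ : ℕ∞) (fun v : Ed d => (((q, v) : Ed d × Ed d), u)) :=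
    ((contDiff_const.prodMk contDiff_id).prodMk contDiff_const)
  have hf : ContDiff ℝ (⊤ : ℕ∞) (fun v => Xv q v u) := hXv.comp hemb
  have hc : ContDiff ℝ (⊤ : ℕ∞) (fun v => C q v u) := hC.comp hemb
  have hfd : ContDiff ℝ (⊤ : ℕ∞) (fun v => fderiv ℝ (fun v => Xv q v u) v) :=
    hf.fderiv_right (by simp)
  have hA : ContDiff ℝ (⊤ : ℕ∞)
      (fun v => ContinuousLinearMap.adjoint (fderiv ℝ (fun v => Xv q v u) v) κ) := by
    have hadj : ContDiff ℝ (⊤ : ℕ∞)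
        (fun v => ContinuousLinearMap.adjoint (fderiv ℝ (fun v => Xv q v u) v)) :=
      (ContinuousLinearMap.adjoint (𝕜 := ℝ) (E := Ed d) (F := Ed d)).contDiff.comp hfd
    exact (ContinuousLinearMap.apply ℝ (Ed d) κ).contDiff.comp hadj
  have hB : ContDiff ℝ (⊤ : ℕ∞) (fun v => gradient (fun v => C q v u) v) := by
    have hcd : ContDiff ℝ (⊤ : ℕ∞) (fun v => fderiv ℝ (fun v => C q v u) v) :=
      hc.fderiv_right (by simp)
    have : ContDiff ℝ (⊤ : ℕ∞)
        (fun v => (InnerProductSpace.toDual ℝ (Ed d)).symm (fderiv ℝ (fun v => C q v u) v)) :=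
      (InnerProductSpace.toDual ℝ (Ed d)).symm.contDiff.comp hcd
    simpa [gradient] using this
  have hGF : Function.LeftInverse G F := by
    intro vv
    simp only [F, G]
    ext <;> simp <;> abel
  have hFG : Function.RightInverse G F := by
    intro pp
    simp only [F, G]
    ext <;> simp <;> abel
  have hFsmooth : ContDiff ℝ (⊤ : ℕ∞) F := by
    apply ContDiff.prodMk
    · exact (contDiff_snd.add (hA.comp contDiff_fst)).sub (hB.comp contDiff_fst)
    · exact contDiff_fst
  have hGsmooth : ContDiff ℝ (⊤ : ℕ∞) G := by
    apply ContDiff.prodMk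
    · exact contDiff_snd
    · exact (contDiff_fst.sub (hA.comp contDiff_snd)).add (hB.comp contDiff_snd)
  exact ⟨⟨hGF.injective, hFG.surjective⟩, hGF, hFG, hFsmooth, hGsmooth⟩
end
end

section
/- Let q, κ : [0,T] → ℝ^d be C² and u : [0,T] → ℝ^n be C¹. Then the following are equivalent on [0,T]: (i) the Euler–Lagrange equations of the new control Lagrangian hold, i.e. (d/dt)[∇_{v_q}L̃(q,κ,q̇,κ̇,u)] equals the gradient of L̃ in q along the curve, (d/dt)[∇_{v_κ}L̃(q,κ,q̇,κ̇,u)] equals the gradient of L̃ in κ along the curve, and the gradient of L̃ in u vanishes along the curve; (ii) the state equation q̈ = X_v(q,q̇,u), the adjoint equation ⟨κ̈, w⟩ = (d/dt)[D_2C(q,q̇,u)w − ⟨κ, D_2X_v(q,q̇,u)w⟩] − D_1C(q,q̇,u)w + ⟨κ, D_1X_v(q,q̇,u)w⟩ for all w ∈ ℝ^d, and the maximization condition D_3C(q,q̇,u)z = ⟨κ, D_3X_v(q,q̇,u)z⟩ for all z ∈ ℝ^n, all hold. (Consequently the necessary optimality conditions provided by the augmented objectives J̃₂ and J̃₃ are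 equivalent.) -/
open scoped RealInnerProductSpace

noncomputable section

namespace ELaux

lemma inner_riesz {d : ℕ} (l : Ed d →L[ℝ] ℝ) (w : Ed d) :
    ⟪∑ i, l (EuclideanSpace.basisFun (Fin d) ℝ i) • EuclideanSpace.basisFun (Fin d) ℝ i, w⟫
      = l w := by
  set b := EuclideanSpace.basisFun (Fin d) ℝ with hb
  have h1 : ⟪∑ i, l (b i) • b i, w⟫ = ∑ i, l (b i) * ⟪b i, w⟫ := by
    rw [sum_inner]
    exact Finset.sum_congr rfl fun i _ => real_inner_smul_left _ _ _
  have h2 : l w = ∑ i, b.repr w i * l (b i) := by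
    conv_lhs => rw [← b.sum_repr w]
    rw [map_sum]
    simp only [map_smul, smul_eq_mul]
  rw [h1, h2]
  refine Finset.sum_congr rfl fun i _ => ?_
  rw [b.repr_apply_apply, mul_comm]

lemma gradient_eq_of {d : ℕ} {f : Ed d → ℝ} {L : Ed d →L[ℝ] ℝ} {v y : Ed d}
    (hf : HasFDerivAt f L v) (h : ∀ w, L w = ⟪y, w⟫) : gradient f v = y := by
  have hL : L = InnerProductSpace.toDual ℝ (Ed d) y := by
    ext w
    rw [h w, InnerProductSpace.toDual_apply_apply]
  rw [hL] at hf
  exact (hasGradientAt_iff_hasFDerivAt.mpr hf).gradient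

lemma inner_gradient {d : ℕ} (f : Ed d → ℝ) (v w : Ed d) :
    ⟪gradient f v, w⟫ = fderiv ℝ f v w := by
  have : gradient f v = (InnerProductSpace.toDual ℝ (Ed d)).symm (fderiv ℝ f v) := rfl
  rw [this, ← InnerProductSpace.toDual_apply_apply, LinearIsometryEquiv.apply_symm_apply]

lemma gradient_eq_zero_iff {d : ℕ} {f : Ed d → ℝ} {L : Ed d →L[ℝ] ℝ} {v : Ed d}
    (hf : HasFDerivAt f L v) : gradient f v = 0 ↔ ∀ w, L w = 0 := by
  have hfd : fderiv ℝ f v = L := hf.fderiv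
  rw [show gradient f v = (InnerProductSpace.toDual ℝ (Ed d)).symm (fderiv ℝ f v) from rfl, hfd]
  constructor
  · intro h w
    have h2 := congrArg (InnerProductSpace.toDual ℝ (Ed d)) h
    rw [LinearIsometryEquiv.apply_symm_apply, map_zero] at h2
    rw [h2]
    rfl
  · intro h
    have : L = 0 := ContinuousLinearMap.ext h
    rw [this, map_zero]

end ELaux

open ELaux

lemma le_infty_one : (1 : WithTop ℕ∞) ≤ ((⊤:ℕ∞) : WithTop ℕ∞) := by
  rw [show (1 : WithTop ℕ∞) = ((1:ℕ∞) : WithTop ℕ∞) from rfl]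
  exact WithTop.coe_le_coe.mpr le_top

lemma le_infty_two : ((1 : WithTop ℕ∞) + 1) ≤ ((⊤:ℕ∞) : WithTop ℕ∞) := by
  rw [show ((1 : WithTop ℕ∞) + 1) = ((2:ℕ∞) : WithTop ℕ∞) from rfl]
  exact WithTop.coe_le_coe.mpr le_top

set_option maxHeartbeats 1000000


/-- The Euler–Lagrange equations of the new control Lagrangian
`L̃(q, κ, v_q, v_κ, u) = ⟪v_κ, v_q⟫ + ⟪κ, X_v(q, v_q, u)⟫ − C(q, v_q, u)`
(together with the vanishing of its gradient in `u`) are equivalent to the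
state equation, the second-order adjoint equation and the maximization condition.
(Hence the optimality conditions of `J̃₂` and `J̃₃` are equivalent.) -/
theorem EL_newLagrangian_iff_state_adjoint_max (d n : ℕ)
    (Xv : Ed d → Ed d → Ed n → Ed d)
    (C : Ed d → Ed d → Ed n → ℝ)
    (hXv : ContDiff ℝ (⊤ : ℕ∞) (fun p : (Ed d × Ed d) × Ed n => Xv p.1.1 p.1.2 p.2))
    (hC : ContDiff ℝ (⊤ : ℕ∞) (fun p : (Ed d × Ed d) × Ed n => C p.1.1 p.1.2 p.2))
    (T : ℝ)
    (q κ : ℝ → Ed d) (u : ℝ → Ed n)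
    (hq : ContDiff ℝ 2 q) (hκ : ContDiff ℝ 2 κ) (hu : ContDiff ℝ 1 u) :
    let Ltil : Ed d → Ed d → Ed d → Ed d → Ed n → ℝ := fun a b vq vκ c =>
      ⟪vκ, vq⟫ + ⟪b, Xv a vq c⟫ - C a vq c
    -- (i) Euler–Lagrange equations of the new control Lagrangian
    ((∀ t ∈ Set.Icc (0 : ℝ) T,
        deriv (fun τ =>
            gradient (fun x => Ltil (q τ) (κ τ) x (deriv κ τ) (u τ)) (deriv q τ)) t
          = gradient (fun x => Ltil x (κ t) (deriv q t) (deriv κ t) (u t)) (q t) ∧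
        deriv (fun τ =>
            gradient (fun x => Ltil (q τ) (κ τ) (deriv q τ) x (u τ)) (deriv κ τ)) t
          = gradient (fun x => Ltil (q t) x (deriv q t) (deriv κ t) (u t)) (κ t) ∧
        gradient (fun x => Ltil (q t) (κ t) (deriv q t) (deriv κ t) x) (u t) = 0)
    ↔
    -- (ii) state dynamics, adjoint dynamics and maximization condition
    (∀ t ∈ Set.Icc (0 : ℝ) T,
        deriv (deriv q) t = Xv (q t) (deriv q t) (u t) ∧
        (∀ w : Ed d, ⟪deriv (deriv κ) t, w⟫ =
            deriv (fun τ =>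
              fderiv ℝ (fun x => C (q τ) x (u τ)) (deriv q τ) w
                - ⟪κ τ, fderiv ℝ (fun x => Xv (q τ) x (u τ)) (deriv q τ) w⟫) t
              - fderiv ℝ (fun x => C x (deriv q t) (u t)) (q t) w
              + ⟪κ t, fderiv ℝ (fun x => Xv x (deriv q t) (u t)) (q t) w⟫) ∧
        (∀ z : Ed n, fderiv ℝ (fun x => C (q t) (deriv q t) x) (u t) z =
            ⟪κ t, fderiv ℝ (fun x => Xv (q t) (deriv q t) x) (u t) z⟫))) := by
  intro Ltil
  classical
  -- basic differentiability of the curves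
  have hq2 : ContDiff ℝ (1 + 1) q := by
    rw [show ((1 : WithTop ℕ∞) + 1) = 2 by norm_num]; exact hq
  have hκ2 : ContDiff ℝ (1 + 1) κ := by
    rw [show ((1 : WithTop ℕ∞) + 1) = 2 by norm_num]; exact hκ
  have hq1 : Differentiable ℝ q := (contDiff_succ_iff_deriv.mp hq2).1
  have hκ1 : Differentiable ℝ κ := (contDiff_succ_iff_deriv.mp hκ2).1
  have hdq : ContDiff ℝ 1 (deriv q) := (contDiff_succ_iff_deriv.mp hq2).2.2
  have hdκ : ContDiff ℝ 1 (deriv κ) := (contDiff_succ_iff_deriv.mp hκ2).2.2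
  have hdq1 : Differentiable ℝ (deriv q) := hdq.differentiable one_ne_zero
  have hdκ1 : Differentiable ℝ (deriv κ) := hdκ.differentiable one_ne_zero
  have hu1 : Differentiable ℝ u := hu.differentiable one_ne_zero
  have hXvd : Differentiable ℝ (fun p : (Ed d × Ed d) × Ed n => Xv p.1.1 p.1.2 p.2) :=
    hXv.differentiable (by simp)
  have hCd : Differentiable ℝ (fun p : (Ed d × Ed d) × Ed n => C p.1.1 p.1.2 p.2) :=
    hC.differentiable (by simp)
  -- differentiability of partial maps
  have hXp2 : ∀ (a v : Ed d) (c : Ed n), DifferentiableAt ℝ (fun x => Xv a x c) v := fun a v c => by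
    have h := (hXvd _).comp v
      (((differentiableAt_const a).prodMk differentiableAt_id).prodMk (differentiableAt_const c))
    exact h
  have hCp2 : ∀ (a v : Ed d) (c : Ed n), DifferentiableAt ℝ (fun x => C a x c) v := fun a v c => by
    have h := (hCd _).comp v
      (((differentiableAt_const a).prodMk differentiableAt_id).prodMk (differentiableAt_const c))
    exact h
  have hXp1 : ∀ (a v : Ed d) (c : Ed n), DifferentiableAt ℝ (fun x => Xv x v c) a := fun a v c => by
    have h := (hXvd _).comp a
      ((differentiableAt_id.prodMk (differentiableAt_const v)).prodMk (differentiableAt_const c))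
    exact h
  have hCp1 : ∀ (a v : Ed d) (c : Ed n), DifferentiableAt ℝ (fun x => C x v c) a := fun a v c => by
    have h := (hCd _).comp a
      ((differentiableAt_id.prodMk (differentiableAt_const v)).prodMk (differentiableAt_const c))
    exact h
  have hXp3 : ∀ (a v : Ed d) (c : Ed n), DifferentiableAt ℝ (fun x => Xv a v x) c := fun a v c => by
    have h := (hXvd _).comp c
      (((differentiableAt_const a).prodMk (differentiableAt_const v)).prodMk differentiableAt_id)
    exact h
  have hCp3 : ∀ (a v : Ed d) (c : Ed n), DifferentiableAt ℝ (fun x => C a v x) c := fun a v c => by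
    have h := (hCd _).comp c
      (((differentiableAt_const a).prodMk (differentiableAt_const v)).prodMk differentiableAt_id)
    exact h
  -- the total auxiliary map
  set Φ : ((Ed d × Ed d) × Ed n) × Ed d → ℝ :=
    fun p => ⟪p.2, Xv p.1.1.1 p.1.1.2 p.1.2⟫ - C p.1.1.1 p.1.1.2 p.1.2 with hΦdef
  have hΦ : ContDiff ℝ (⊤ : ℕ∞) Φ := by
    apply ContDiff.sub
    · exact ContDiff.inner ℝ contDiff_snd (hXv.comp contDiff_fst)
    · exact hC.comp contDiff_fst
  have hΦd : Differentiable ℝ Φ := hΦ.differentiable (by simp)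
  set J : Ed d →L[ℝ] ((Ed d × Ed d) × Ed n) × Ed d :=
    ((((0 : Ed d →L[ℝ] Ed d).prod (ContinuousLinearMap.id ℝ (Ed d))).prod
      (0 : Ed d →L[ℝ] Ed n)).prod (0 : Ed d →L[ℝ] Ed d)) with hJdef
  -- partial derivative in the velocity slot via Φ
  have hpart : ∀ (a v : Ed d) (c : Ed n) (b : Ed d),
      HasFDerivAt (fun x : Ed d => ⟪b, Xv a x c⟫ - C a x c)
        ((fderiv ℝ Φ (((a, v), c), b)).comp J) v := by
    intro a v c b
    have hι : HasFDerivAt (fun x : Ed d => (((a, x), c), b)) J v :=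
      ((((hasFDerivAt_const a v).prodMk (hasFDerivAt_id v)).prodMk (hasFDerivAt_const c v)).prodMk
        (hasFDerivAt_const b v))
    exact (hΦd _).hasFDerivAt.comp v hι
  -- the curve of linear functionals and its Riesz representative
  set ℓ : ℝ → (Ed d →L[ℝ] ℝ) :=
    fun τ => (fderiv ℝ Φ (((q τ, deriv q τ), u τ), κ τ)).comp J with hℓdef
  have hℓ : Differentiable ℝ ℓ := by
    have hfd : ContDiff ℝ 1 (fderiv ℝ Φ) :=
      hΦ.fderiv_right le_infty_two
    have hcurve : Differentiable ℝ (fun τ => (((q τ, deriv q τ), u τ), κ τ)) :=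
      ((hq1.prodMk hdq1).prodMk hu1).prodMk hκ1
    exact ((hfd.differentiable one_ne_zero).comp hcurve).clm_comp (differentiable_const J)
  set bE := EuclideanSpace.basisFun (Fin d) ℝ with hbEdef
  set B : ℝ → Ed d := fun τ => ∑ i, ℓ τ (bE i) • bE i with hBdef
  have hB : Differentiable ℝ B := by
    apply Differentiable.fun_sum
    intro i _
    exact (hℓ.clm_apply (differentiable_const _)).smul_const _
  have hBinner : ∀ τ w, ⟪B τ, w⟫ = ℓ τ w := fun τ w => inner_riesz (ℓ τ) w
  -- scalar identity for ℓ
  have hℓeq : ∀ τ (w : Ed d), ℓ τ w =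
      ⟪κ τ, fderiv ℝ (fun x => Xv (q τ) x (u τ)) (deriv q τ) w⟫
        - fderiv ℝ (fun x => C (q τ) x (u τ)) (deriv q τ) w := by
    intro τ w
    have h1 : HasFDerivAt (fun x : Ed d => ⟪κ τ, Xv (q τ) x (u τ)⟫ - C (q τ) x (u τ))
        (((innerSL ℝ (κ τ)).comp (fderiv ℝ (fun x => Xv (q τ) x (u τ)) (deriv q τ)))
          - fderiv ℝ (fun x => C (q τ) x (u τ)) (deriv q τ)) (deriv q τ) :=
      (((innerSL ℝ (κ τ)).hasFDerivAt).comp _ (hXp2 _ _ _).hasFDerivAt).sub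
        (hCp2 _ _ _).hasFDerivAt
    have h2 := hpart (q τ) (deriv q τ) (u τ) (κ τ)
    have h3 : ℓ τ = _ := h2.unique h1
    rw [h3]
    simp [ContinuousLinearMap.sub_apply, ContinuousLinearMap.comp_apply, innerSL_apply_apply]
  -- EL1 left-hand function
  have hF1 : (fun τ => gradient (fun x => Ltil (q τ) (κ τ) x (deriv κ τ) (u τ)) (deriv q τ))
      = fun τ => deriv κ τ + B τ := by
    funext τ
    have hfun : (fun x => Ltil (q τ) (κ τ) x (deriv κ τ) (u τ))
        = fun x => (⟪deriv κ τ, x⟫ : ℝ)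
            + (⟪κ τ, Xv (q τ) x (u τ)⟫ - C (q τ) x (u τ)) := by
      funext x
      simp only [Ltil]
      ring
    have hfd : HasFDerivAt (fun x => Ltil (q τ) (κ τ) x (deriv κ τ) (u τ))
        ((innerSL ℝ (deriv κ τ)) + (fderiv ℝ Φ (((q τ, deriv q τ), u τ), κ τ)).comp J)
        (deriv q τ) := by
      rw [hfun]
      exact ((innerSL ℝ (deriv κ τ)).hasFDerivAt).add (hpart _ _ _ _)
    refine gradient_eq_of hfd fun w => ?_
    rw [ContinuousLinearMap.add_apply, innerSL_apply_apply, inner_add_left]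
    congr 1
    exact (hBinner τ w).symm
  -- EL2 left-hand function is deriv q
  have hF2 : (fun τ => gradient (fun x => Ltil (q τ) (κ τ) (deriv q τ) x (u τ)) (deriv κ τ))
      = deriv q := by
    funext τ
    have hfun : (fun x => Ltil (q τ) (κ τ) (deriv q τ) x (u τ))
        = fun x => (⟪deriv q τ, x⟫ : ℝ)
            + (⟪κ τ, Xv (q τ) (deriv q τ) (u τ)⟫ - C (q τ) (deriv q τ) (u τ)) := by
      funext x
      simp only [Ltil, real_inner_comm (deriv q τ) x]
      ring
    refine gradient_eq_of (L := innerSL ℝ (deriv q τ) + 0) ?_ fun w => ?_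
    · rw [hfun]
      exact ((innerSL ℝ (deriv q τ)).hasFDerivAt).add (hasFDerivAt_const _ _)
    · simp
  -- EL2 right-hand side
  have hRHS2 : ∀ t, gradient (fun x => Ltil (q t) x (deriv q t) (deriv κ t) (u t)) (κ t)
      = Xv (q t) (deriv q t) (u t) := by
    intro t
    have hfun : (fun x => Ltil (q t) x (deriv q t) (deriv κ t) (u t))
        = fun x => (⟪Xv (q t) (deriv q t) (u t), x⟫ : ℝ)
            + (⟪deriv κ t, deriv q t⟫ - C (q t) (deriv q t) (u t)) := by
      funext x
      simp only [Ltil, real_inner_comm (Xv (q t) (deriv q t) (u t)) x]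
      ring
    refine gradient_eq_of (L := innerSL ℝ (Xv (q t) (deriv q t) (u t)) + 0) ?_ fun w => ?_
    · rw [hfun]
      exact ((innerSL ℝ (Xv (q t) (deriv q t) (u t))).hasFDerivAt).add (hasFDerivAt_const _ _)
    · simp
  -- EL1 right-hand side as inner products
  have hRHS1 : ∀ t (w : Ed d),
      ⟪gradient (fun x => Ltil x (κ t) (deriv q t) (deriv κ t) (u t)) (q t), w⟫
        = ⟪κ t, fderiv ℝ (fun x => Xv x (deriv q t) (u t)) (q t) w⟫
          - fderiv ℝ (fun x => C x (deriv q t) (u t)) (q t) w := by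
    intro t w
    have hfd : HasFDerivAt (fun x => Ltil x (κ t) (deriv q t) (deriv κ t) (u t))
        ((0 + (innerSL ℝ (κ t)).comp (fderiv ℝ (fun x => Xv x (deriv q t) (u t)) (q t)))
          - fderiv ℝ (fun x => C x (deriv q t) (u t)) (q t)) (q t) := by
      exact ((hasFDerivAt_const _ _).add
        (((innerSL ℝ (κ t)).hasFDerivAt).comp _ (hXp1 _ _ _).hasFDerivAt)).sub
        (hCp1 _ _ _).hasFDerivAt
    rw [inner_gradient, hfd.fderiv]
    simp [ContinuousLinearMap.sub_apply, ContinuousLinearMap.comp_apply, innerSL_apply_apply]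
  -- derivative of the scalar adjoint integrand
  have hBD : ∀ t (w : Ed d),
      deriv (fun τ =>
          fderiv ℝ (fun x => C (q τ) x (u τ)) (deriv q τ) w
            - ⟪κ τ, fderiv ℝ (fun x => Xv (q τ) x (u τ)) (deriv q τ) w⟫) t
        = -⟪deriv B t, w⟫ := by
    intro t w
    have h1 : (fun τ =>
        fderiv ℝ (fun x => C (q τ) x (u τ)) (deriv q τ) w
          - ⟪κ τ, fderiv ℝ (fun x => Xv (q τ) x (u τ)) (deriv q τ) w⟫)
        = fun τ => -⟪B τ, w⟫ := by
      funext τ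
      rw [hBinner τ w, hℓeq τ w]
      ring
    rw [h1]
    rw [deriv.fun_neg]
    congr 1
    have h2 : HasDerivAt (fun τ => ⟪B τ, w⟫) (⟪B t, 0⟫ + ⟪deriv B t, w⟫) t :=
      HasDerivAt.inner ℝ (hB t).hasDerivAt (hasDerivAt_const t w)
    have := h2.deriv
    simpa using this
  -- splitting of the EL1 derivative
  have hsplit : ∀ t, deriv (fun τ => deriv κ τ + B τ) t = deriv (deriv κ) t + deriv B t :=
    fun t => deriv_add (hdκ1 t) (hB t)
  -- pointwise equivalences
  have main : ∀ t,
      ((deriv (fun τ =>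
            gradient (fun x => Ltil (q τ) (κ τ) x (deriv κ τ) (u τ)) (deriv q τ)) t
          = gradient (fun x => Ltil x (κ t) (deriv q t) (deriv κ t) (u t)) (q t)) ∧
        (deriv (fun τ =>
            gradient (fun x => Ltil (q τ) (κ τ) (deriv q τ) x (u τ)) (deriv κ τ)) t
          = gradient (fun x => Ltil (q t) x (deriv q t) (deriv κ t) (u t)) (κ t)) ∧
        gradient (fun x => Ltil (q t) (κ t) (deriv q t) (deriv κ t) x) (u t) = 0)
      ↔ (deriv (deriv q) t = Xv (q t) (deriv q t) (u t) ∧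
        (∀ w : Ed d, ⟪deriv (deriv κ) t, w⟫ =
            deriv (fun τ =>
              fderiv ℝ (fun x => C (q τ) x (u τ)) (deriv q τ) w
                - ⟪κ τ, fderiv ℝ (fun x => Xv (q τ) x (u τ)) (deriv q τ) w⟫) t
              - fderiv ℝ (fun x => C x (deriv q t) (u t)) (q t) w
              + ⟪κ t, fderiv ℝ (fun x => Xv x (deriv q t) (u t)) (q t) w⟫) ∧
        (∀ z : Ed n, fderiv ℝ (fun x => C (q t) (deriv q t) x) (u t) z =
            ⟪κ t, fderiv ℝ (fun x => Xv (q t) (deriv q t) x) (u t) z⟫)) := by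
    intro t
    have iff2 : (deriv (fun τ =>
            gradient (fun x => Ltil (q τ) (κ τ) (deriv q τ) x (u τ)) (deriv κ τ)) t
          = gradient (fun x => Ltil (q t) x (deriv q t) (deriv κ t) (u t)) (κ t))
        ↔ deriv (deriv q) t = Xv (q t) (deriv q t) (u t) := by
      rw [hF2, hRHS2 t]
    have iff3 : (gradient (fun x => Ltil (q t) (κ t) (deriv q t) (deriv κ t) x) (u t) = 0)
        ↔ (∀ z : Ed n, fderiv ℝ (fun x => C (q t) (deriv q t) x) (u t) z =
            ⟪κ t, fderiv ℝ (fun x => Xv (q t) (deriv q t) x) (u t) z⟫) := by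
      have hfd : HasFDerivAt (fun x => Ltil (q t) (κ t) (deriv q t) (deriv κ t) x)
          ((0 + (innerSL ℝ (κ t)).comp (fderiv ℝ (fun x => Xv (q t) (deriv q t) x) (u t)))
            - fderiv ℝ (fun x => C (q t) (deriv q t) x) (u t)) (u t) := by
        exact ((hasFDerivAt_const _ _).add
          (((innerSL ℝ (κ t)).hasFDerivAt).comp _ (hXp3 _ _ _).hasFDerivAt)).sub
          (hCp3 _ _ _).hasFDerivAt
      rw [gradient_eq_zero_iff hfd]
      constructor
      · intro h z
        have := h z
        simp only [ContinuousLinearMap.sub_apply, ContinuousLinearMap.add_apply,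
          ContinuousLinearMap.zero_apply, ContinuousLinearMap.comp_apply, innerSL_apply_apply,
          zero_add] at this
        linarith [this]
      · intro h z
        have := h z
        simp only [ContinuousLinearMap.sub_apply, ContinuousLinearMap.add_apply,
          ContinuousLinearMap.zero_apply, ContinuousLinearMap.comp_apply, innerSL_apply_apply,
          zero_add]
        linarith [this]
    have iff1 : (deriv (fun τ =>
            gradient (fun x => Ltil (q τ) (κ τ) x (deriv κ τ) (u τ)) (deriv q τ)) t
          = gradient (fun x => Ltil x (κ t) (deriv q t) (deriv κ t) (u t)) (q t))
        ↔ (∀ w : Ed d, ⟪deriv (deriv κ) t, w⟫ =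
            deriv (fun τ =>
              fderiv ℝ (fun x => C (q τ) x (u τ)) (deriv q τ) w
                - ⟪κ τ, fderiv ℝ (fun x => Xv (q τ) x (u τ)) (deriv q τ) w⟫) t
              - fderiv ℝ (fun x => C x (deriv q t) (u t)) (q t) w
              + ⟪κ t, fderiv ℝ (fun x => Xv x (deriv q t) (u t)) (q t) w⟫) := by
      rw [hF1, hsplit t]
      constructor
      · intro h w
        have h2 := congrArg (fun y : Ed d => (⟪y, w⟫ : ℝ)) h
        simp only [inner_add_left] at h2
        rw [hRHS1 t w] at h2
        rw [hBD t w]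
        linarith [h2]
      · intro h
        apply ext_inner_right ℝ
        intro w
        rw [inner_add_left, hRHS1 t w]
        have h2 := h w
        rw [hBD t w] at h2
        linarith [h2]
    constructor
    · rintro ⟨h1, h2, h3⟩
      exact ⟨iff2.mp h2, iff1.mp h1, iff3.mp h3⟩
    · rintro ⟨h2, h1, h3⟩
      exact ⟨iff1.mpr h1, iff2.mpr h2, iff3.mpr h3⟩
  exact forall₂_congr fun t _ => main t
end
end

section
/- For all (q, κ, v_q, v_κ, u) ∈ ℝ^d × ℝ^d × ℝ^d × ℝ^d × ℝ^n and all (p_q, p_κ) ∈ ℝ^d × ℝ^d: (i) L̃(q, κ, v_q, v_κ, u) = H₋₁(q, v_q, v_κ, κ, u), i.e. the new control Lagrangian equals Pontryagin's control Hamiltonian composed with the Tulczyjew map α(q, κ, v_q, v_κ) = (q, v_q, v_κ, κ); and (ii) H̃(q, κ, p_q, p_κ, u) = −H₋₁(q, p_κ, −p_q, κ, u), i.e. the new control Hamiltonian equals minus Pontryagin's control Hamiltonian composed with α ∘ β⁻¹, where β(q, κ, v_q, v_κ) = (q, κ, −v_κ, v_q). -/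
open scoped RealInnerProductSpace

noncomputable section

/-- (i) The new control Lagrangian equals Pontryagin's control Hamiltonian composed
with the Tulczyjew map `α(q, κ, v_q, v_κ) = (q, v_q, v_κ, κ)`, and (ii) the new control
Hamiltonian equals minus Pontryagin's control Hamiltonian composed with `α ∘ β⁻¹`,
where `β(q, κ, v_q, v_κ) = (q, κ, −v_κ, v_q)`. -/
theorem newLagrangian_and_newHamiltonian_vs_Pontryagin (d n : ℕ)
    (Xv : Ed d → Ed d → Ed n → Ed d)
    (C : Ed d → Ed d → Ed n → ℝ) :
    let Ltil : Ed d → Ed d → Ed d → Ed d → Ed n → ℝ := fun q κ vq vκ u =>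
      ⟪vκ, vq⟫ + ⟪κ, Xv q vq u⟫ - C q vq u
    let Hm1 : Ed d → Ed d → Ed d → Ed d → Ed n → ℝ := fun q v lamq lamv u =>
      ⟪lamq, v⟫ + ⟪lamv, Xv q v u⟫ - C q v u
    let Htil : Ed d → Ed d → Ed d → Ed d → Ed n → ℝ := fun q κ pq pκ u =>
      ⟪pq, pκ⟫ - ⟪κ, Xv q pκ u⟫ + C q pκ u
    (∀ (q κ vq vκ : Ed d) (u : Ed n),
        Ltil q κ vq vκ u = Hm1 q vq vκ κ u) ∧
    (∀ (q κ pq pκ : Ed d) (u : Ed n),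
        Htil q κ pq pκ u = - Hm1 q pκ (-pq) κ u) := by
  refine ⟨fun q κ vq vκ u => by simp [real_inner_comm vκ vq],
    fun q κ pq pκ u => by simp [inner_neg_left, real_inner_comm pκ pq]; ring⟩
end
end

section
/- Let L : ℝ^d × ℝ^d → ℝ be smooth and hyperregular in the sense that for every q the map v ↦ ∇_vL(q, v) is a bijection of ℝ^d and the Hessian D_{22}L(q, v) is an invertible linear map for every (q, v); let f_L : ℝ^d × ℝ^d × ℝ^n → ℝ^d and C : ℝ^d × ℝ^d × ℝ^n → ℝ be smooth. Then for each fixed (q, ξ, u) ∈ ℝ^d × ℝ^d × ℝ^n, the fiber-derivative map (v_q, v_ξ) ↦ (ϖ_q, ϖ_ξ) of the new control Lagrangian L̃_L, given by ϖ_q = D_{22}L(q, v_q) v_ξ + (D_{12}L(q, v_q))ᵀ ξ + (D_2 f_L(q, v_q, u))ᵀ ξ − ∇_{v_q}C(q, v_q, u) and ϖ_ξ = ∇_v L(q, v_q), is a bijection of ℝ^d × ℝ^d. -/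
open scoped RealInnerProductSpace

noncomputable section

/-- If `L` is hyperregular (fiberwise bijective fiber derivative with everywhere
invertible Hessian `D₂₂L`), then for each fixed `(q, ξ, u)` the fiber-derivative map
of the new control Lagrangian
`L̃_L(q, ξ, v_q, v_ξ, u) = ⟪∇_vL(q,v_q), v_ξ⟫ + ⟪∇_qL(q,v_q) + f_L(q,v_q,u), ξ⟫ − C(q,v_q,u)`,
namely `(v_q, v_ξ) ↦ (ϖ_q, ϖ_ξ)` with
`ϖ_q = D₂₂L(q,v_q) v_ξ + (D₁₂L(q,v_q))ᵀ ξ + (D₂f_L(q,v_q,u))ᵀ ξ − ∇_{v_q}C(q,v_q,u)` and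
`ϖ_ξ = ∇_vL(q,v_q)`, is a bijection of `ℝ^d × ℝ^d`. -/
theorem newLagrangian_forced_hyperregular (d n : ℕ)
    (L : Ed d → Ed d → ℝ)
    (fL : Ed d → Ed d → Ed n → Ed d)
    (C : Ed d → Ed d → Ed n → ℝ)
    (hL : ContDiff ℝ (⊤ : ℕ∞) (fun p : Ed d × Ed d => L p.1 p.2))
    (hfL : ContDiff ℝ (⊤ : ℕ∞) (fun p : (Ed d × Ed d) × Ed n => fL p.1.1 p.1.2 p.2))
    (hC : ContDiff ℝ (⊤ : ℕ∞) (fun p : (Ed d × Ed d) × Ed n => C p.1.1 p.1.2 p.2))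
    (hfib : ∀ q : Ed d, Function.Bijective (fun v => gradient (fun w => L q w) v))
    (hhess : ∀ (q v : Ed d),
      Function.Bijective ⇑(fderiv ℝ (fun w => gradient (fun w' => L q w') w) v)) :
    ∀ (q ξ : Ed d) (u : Ed n),
      Function.Bijective (fun vv : Ed d × Ed d =>
        ((fderiv ℝ (fun w => gradient (fun w' => L q w') w) vv.1) vv.2
            + ContinuousLinearMap.adjoint
                (fderiv ℝ (fun x => gradient (fun w' => L x w') vv.1) q) ξ
            + ContinuousLinearMap.adjoint (fderiv ℝ (fun w => fL q w u) vv.1) ξ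
            - gradient (fun w => C q w u) vv.1,
          gradient (fun w => L q w) vv.1)) := by
  intro q ξ u
  set F : Ed d → Ed d := fun v => gradient (fun w => L q w) v with hF
  set A : Ed d → Ed d →L[ℝ] Ed d :=
    fun v => fderiv ℝ (fun w => gradient (fun w' => L q w') w) v with hA
  set G : Ed d → Ed d := fun v =>
    ContinuousLinearMap.adjoint (fderiv ℝ (fun x => gradient (fun w' => L x w') v) q) ξ
      + ContinuousLinearMap.adjoint (fderiv ℝ (fun w => fL q w u) v) ξ
      - gradient (fun w => C q w u) v with hG
  have key : (fun vv : Ed d × Ed d =>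
        ((fderiv ℝ (fun w => gradient (fun w' => L q w') w) vv.1) vv.2
            + ContinuousLinearMap.adjoint
                (fderiv ℝ (fun x => gradient (fun w' => L x w') vv.1) q) ξ
            + ContinuousLinearMap.adjoint (fderiv ℝ (fun w => fL q w u) vv.1) ξ
            - gradient (fun w => C q w u) vv.1,
          gradient (fun w => L q w) vv.1))
      = fun vv : Ed d × Ed d => (A vv.1 vv.2 + G vv.1, F vv.1) := by
    funext vv
    simp only [hA, hG, hF]
    abel_nf
  rw [key]
  constructor
  · rintro ⟨v1, v2⟩ ⟨w1, w2⟩ h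
    simp only [Prod.mk.injEq] at h
    obtain ⟨h1, h2⟩ := h
    have hv : v1 = w1 := (hfib q).1 h2
    subst hv
    have : A v1 v2 = A v1 w2 := add_right_cancel h1
    have hv2 : v2 = w2 := (hhess q v1).1 this
    simp [hv2]
  · rintro ⟨p, w⟩
    obtain ⟨v1, hv1⟩ := (hfib q).2 w
    obtain ⟨v2, hv2⟩ := (hhess q v1).2 (p - G v1)
    refine ⟨(v1, v2), ?_⟩
    simp only
    rw [hv2]
    simp only [sub_add_cancel]
    exact Prod.ext rfl hv1
end
end

section
/- Let φ : ℝ^d → ℝ^d be a C² diffeomorphism with C² inverse η := φ⁻¹. Define the lifted actions: on TT*Q-coordinates, Φ^{TT*}(q, κ, v_q, v_κ) = (φ(q), (Dη(φ(q)))ᵀκ, Dφ(q)v_q, (T_w)ᵀκ + (Dη(φ(q)))ᵀv_κ) where T_w : ℝ^d → ℝ^d is the linear map z ↦ D²η(φ(q))(Dφ(q)v_q, z); on T*TQ-coordinates, Φ^{T*T}(q, v, λ_q, λ_v) = (φ(q), Dφ(q)v, (Dη(φ(q)))ᵀλ_q + (T'_v)ᵀλ_v, (Dη(φ(q)))ᵀλ_v)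 where T'_v : ℝ^d → ℝ^d is z ↦ D²η(φ(q))(Dφ(q)v, z); and on T*T*Q-coordinates, Φ^{T*T*}(q, κ, p_q, p_κ) = (φ(q), (Dη(φ(q)))ᵀκ, (Dη(φ(q)))ᵀp_q + Nᵀκ, Dφ(q)p_κ) where N : ℝ^d → ℝ^d is z ↦ Dη(φ(q))·D²φ(q)(Dη(φ(q))z, p_κ). Then with α(q, κ, v_q, v_κ) = (q, v_q, v_κ, κ) and β(q, κ, v_q, v_κ) = (q, κ, −v_κ, v_q), one has α ∘ Φ^{TT*} = Φ^{T*T} ∘ α and β ∘ Φ^{TT*} = Φ^{T*T*} ∘ β on all of ℝ^{4d}. (Tulczyjew's isomorphisms are equivariant with respect to the lifted group actions.) -/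
open scoped RealInnerProductSpace

noncomputable section

/-- Differentiating `Dη(φ x) ∘ Dφ x = id`: the second derivative of the inverse. -/
lemma key_deriv (d : ℕ) (φ η : Ed d → Ed d)
    (hφ : ContDiff ℝ 2 φ) (hη : ContDiff ℝ 2 η)
    (hli : Function.LeftInverse η φ) (hri : Function.RightInverse η φ)
    (q w z : Ed d) :
    fderiv ℝ (fun x => fderiv ℝ η x) (φ q) ((fderiv ℝ φ q) w) z
      = - fderiv ℝ η (φ q) (fderiv ℝ (fun x => fderiv ℝ φ x) q w (fderiv ℝ η (φ q) z)) := by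
  have hφd : Differentiable ℝ φ := hφ.differentiable (by norm_num)
  have hηd : Differentiable ℝ η := hη.differentiable (by norm_num)
  have hφ1 : ContDiff ℝ 1 (fderiv ℝ φ) := hφ.fderiv_right (by norm_num)
  have hη1 : ContDiff ℝ 1 (fderiv ℝ η) := hη.fderiv_right (by norm_num)
  have hLI : ∀ a : Ed d, (fderiv ℝ η (φ a)).comp (fderiv ℝ φ a)
      = ContinuousLinearMap.id ℝ (Ed d) := by
    intro a
    have h1 : fderiv ℝ (η ∘ φ) a = (fderiv ℝ η (φ a)).comp (fderiv ℝ φ a) :=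
      fderiv_comp a (hηd _) (hφd _)
    have h2 : (η ∘ φ) = id := funext hli
    rw [h2, fderiv_id] at h1
    exact h1.symm
  have hRI : (fderiv ℝ φ q).comp (fderiv ℝ η (φ q)) = ContinuousLinearMap.id ℝ (Ed d) := by
    have h1 : fderiv ℝ (φ ∘ η) (φ q) = (fderiv ℝ φ (η (φ q))).comp (fderiv ℝ η (φ q)) :=
      fderiv_comp (φ q) (hφd _) (hηd _)
    have h2 : (φ ∘ η) = id := funext hri
    rw [h2, fderiv_id, hli q] at h1
    exact h1.symm
  have hc : HasFDerivAt (fun x => fderiv ℝ η (φ x))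
      ((fderiv ℝ (fun x => fderiv ℝ η x) (φ q)).comp (fderiv ℝ φ q)) q :=
    ((hη1.differentiable one_ne_zero (φ q)).hasFDerivAt).comp q (hφd q).hasFDerivAt
  have hd : HasFDerivAt (fun x => fderiv ℝ φ x)
      (fderiv ℝ (fun x => fderiv ℝ φ x) q) q :=
    (hφ1.differentiable one_ne_zero q).hasFDerivAt
  have hprod := hc.clm_comp hd
  have hconst : (fun x => (fderiv ℝ η (φ x)).comp (fderiv ℝ φ x))
      = fun _ : Ed d => ContinuousLinearMap.id ℝ (Ed d) := funext fun a => hLI a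
  rw [hconst] at hprod
  have hzero := hprod.unique (hasFDerivAt_const _ _)
  have hz : (fderiv ℝ φ q) ((fderiv ℝ η (φ q)) z) = z := by
    have := congrArg (fun T => T z) hRI
    simpa using this
  have := congrArg (fun T => (T w) ((fderiv ℝ η (φ q)) z)) hzero
  simp only [ContinuousLinearMap.add_apply, ContinuousLinearMap.comp_apply,
    ContinuousLinearMap.zero_apply, ContinuousLinearMap.flip_apply,
    ContinuousLinearMap.compL_apply] at this
  rw [hz] at this
  rw [add_comm] at this
  exact eq_neg_of_add_eq_zero_left this

/-- Tulczyjew's isomorphisms `α(q,κ,v_q,v_κ) = (q,v_q,v_κ,κ)` and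
`β(q,κ,v_q,v_κ) = (q,κ,−v_κ,v_q)` are equivariant with respect to the lifted actions
of a `C²` diffeomorphism `φ` of the base `ℝ^d` on `TT*Q`, `T*TQ` and `T*T*Q`. -/
theorem tulczyjew_maps_equivariant (d : ℕ)
    (φ η : Ed d → Ed d)
    (hφ : ContDiff ℝ 2 φ) (hη : ContDiff ℝ 2 η)
    (hli : Function.LeftInverse η φ) (hri : Function.RightInverse η φ) :
    let Dφ : Ed d → (Ed d →L[ℝ] Ed d) := fun a => fderiv ℝ φ a
    let Dη : Ed d → (Ed d →L[ℝ] Ed d) := fun a => fderiv ℝ η a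
    let D2φ : Ed d → (Ed d →L[ℝ] Ed d →L[ℝ] Ed d) := fun a => fderiv ℝ (fun x => fderiv ℝ φ x) a
    let D2η : Ed d → (Ed d →L[ℝ] Ed d →L[ℝ] Ed d) := fun a => fderiv ℝ (fun x => fderiv ℝ η x) a
    -- lifted action on TT*Q, coordinates (q, κ, v_q, v_κ)
    let ΦTTs : Ed d × Ed d × Ed d × Ed d → Ed d × Ed d × Ed d × Ed d := fun x =>
      (φ x.1,
       ContinuousLinearMap.adjoint (Dη (φ x.1)) x.2.1,
       Dφ x.1 x.2.2.1,
       ContinuousLinearMap.adjoint ((D2η (φ x.1)) ((Dφ x.1) x.2.2.1)) x.2.1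
         + ContinuousLinearMap.adjoint (Dη (φ x.1)) x.2.2.2)
    -- lifted action on T*TQ, coordinates (q, v, λ_q, λ_v)
    let ΦTsT : Ed d × Ed d × Ed d × Ed d → Ed d × Ed d × Ed d × Ed d := fun x =>
      (φ x.1,
       Dφ x.1 x.2.1,
       ContinuousLinearMap.adjoint (Dη (φ x.1)) x.2.2.1
         + ContinuousLinearMap.adjoint ((D2η (φ x.1)) ((Dφ x.1) x.2.1)) x.2.2.2,
       ContinuousLinearMap.adjoint (Dη (φ x.1)) x.2.2.2)
    -- lifted action on T*T*Q, coordinates (q, κ, p_q, p_κ)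
    let ΦTsTs : Ed d × Ed d × Ed d × Ed d → Ed d × Ed d × Ed d × Ed d := fun x =>
      (φ x.1,
       ContinuousLinearMap.adjoint (Dη (φ x.1)) x.2.1,
       ContinuousLinearMap.adjoint (Dη (φ x.1)) x.2.2.1
         + ContinuousLinearMap.adjoint
             ((Dη (φ x.1)).comp ((((D2φ x.1).comp (Dη (φ x.1))).flip) x.2.2.2)) x.2.1,
       Dφ x.1 x.2.2.2)
    -- Tulczyjew's maps
    let α : Ed d × Ed d × Ed d × Ed d → Ed d × Ed d × Ed d × Ed d := fun x =>
      (x.1, x.2.2.1, x.2.2.2, x.2.1)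
    let β : Ed d × Ed d × Ed d × Ed d → Ed d × Ed d × Ed d × Ed d := fun x =>
      (x.1, x.2.1, -x.2.2.2, x.2.2.1)
    ∀ x : Ed d × Ed d × Ed d × Ed d,
      α (ΦTTs x) = ΦTsT (α x) ∧ β (ΦTTs x) = ΦTsTs (β x) := by
  intro Dφ Dη D2φ D2η ΦTTs ΦTsT ΦTsTs α β x
  obtain ⟨q, κ, vq, vκ⟩ := x
  have hsymm : ∀ u w : Ed d,
      fderiv ℝ (fun x => fderiv ℝ φ x) q u w = fderiv ℝ (fun x => fderiv ℝ φ x) q w u :=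
    fun u w =>
      second_derivative_symmetric (fun y => (hφ.differentiable (by norm_num) y).hasFDerivAt)
        (((hφ.fderiv_right (m := 1) (by norm_num)).differentiable one_ne_zero q).hasFDerivAt) u w
  have hM : D2η (φ q) (Dφ q vq)
      = -((Dη (φ q)).comp ((((D2φ q).comp (Dη (φ q))).flip) vq)) := by
    ext z
    simp only [Dη, Dφ, D2η, D2φ, ContinuousLinearMap.neg_apply,
      ContinuousLinearMap.comp_apply, ContinuousLinearMap.flip_apply]
    rw [key_deriv d φ η hφ hη hli hri q vq z, hsymm]
  constructor
  · simp only [α, ΦTTs, ΦTsT]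
    exact Prod.ext rfl (Prod.ext rfl (Prod.ext (add_comm _ _) rfl))
  · simp only [β, ΦTTs, ΦTsTs]
    refine Prod.ext rfl (Prod.ext rfl (Prod.ext ?_ rfl))
    rw [hM]
    simp only [map_neg, ContinuousLinearMap.neg_apply]
    abel
end
end

section
/- Let φ : ℝ^d → ℝ^d be a C² diffeomorphism with C² inverse η := φ⁻¹, and let ψ : ℝ^d × ℝ^d → (ℝ^n →ₗ ℝ^n) be any map (fiber action on controls). Then the following are equivalent: (a) L̃ is invariant, i.e. L̃(φ(q), (Dη(φ(q)))ᵀκ, Dφ(q)v_q, (T_{v_q})ᵀκ + (Dη(φ(q)))ᵀv_κ, ψ(q, v_q)u) = L̃(q, κ, v_q, v_κ, u) for all arguments, where T_{v_q} : z ↦ D²η(φ(q))(Dφ(q)v_q, z); (b) H̃ is invariant, i.e. H̃(φ(q), (Dη(φ(q)))ᵀκ, (Dη(φ(q)))ᵀp_q + Nᵀκ, Dφ(q)p_κ, ψ(q, p_κ)u) = H̃(q, κ, p_q, p_κ, u) for all arguments, where N : z ↦ Dη(φ(q))·D²φ(q)(Dη(φ(q))z, p_κ); (c) H₋₁ is invariant,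 i.e. H₋₁(φ(q), Dφ(q)v, (Dη(φ(q)))ᵀλ_q + (T_v)ᵀλ_v, (Dη(φ(q)))ᵀλ_v, ψ(q, v)u) = H₋₁(q, v, λ_q, λ_v, u) for all arguments. -/
open scoped RealInnerProductSpace

noncomputable section

section Aux
variable {d : ℕ} {φ η : Ed d → Ed d}

lemma chain_BA (hφ : ContDiff ℝ 2 φ) (hη : ContDiff ℝ 2 η)
    (hli : Function.LeftInverse η φ) (q v : Ed d) :
    fderiv ℝ η (φ q) (fderiv ℝ φ q v) = v := by
  have hcomp : η ∘ φ = id := funext hli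
  have h1 : fderiv ℝ (η ∘ φ) q = (fderiv ℝ η (φ q)).comp (fderiv ℝ φ q) :=
    fderiv_comp q (hη.differentiable two_ne_zero).differentiableAt
      (hφ.differentiable two_ne_zero).differentiableAt
  have h2 : fderiv ℝ (η ∘ φ) q = ContinuousLinearMap.id ℝ (Ed d) := by
    rw [hcomp]; exact fderiv_id
  have h3 := h1.symm.trans h2
  have := congrArg (fun (L : Ed d →L[ℝ] Ed d) => L v) h3
  simpa using this

lemma second_identity (hφ : ContDiff ℝ 2 φ) (hη : ContDiff ℝ 2 η)
    (hli : Function.LeftInverse η φ) (q ξ ζ : Ed d) :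
    fderiv ℝ (fun x => fderiv ℝ η x) (φ q) (fderiv ℝ φ q ξ) (fderiv ℝ φ q ζ)
      + fderiv ℝ η (φ q) (fderiv ℝ (fun x => fderiv ℝ φ x) q ξ ζ) = 0 := by
  have hη1 : ContDiff ℝ 1 (fderiv ℝ η) := hη.fderiv_right (by norm_num)
  have hφ1 : ContDiff ℝ 1 (fderiv ℝ φ) := hφ.fderiv_right (by norm_num)
  have hc : HasFDerivAt (fun x => fderiv ℝ η (φ x))
      ((fderiv ℝ (fderiv ℝ η) (φ q)).comp (fderiv ℝ φ q)) q :=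
    ((hη1.differentiable one_ne_zero (φ q)).hasFDerivAt).comp q
      ((hφ.differentiable two_ne_zero q).hasFDerivAt)
  have hd : HasFDerivAt (fun x => fderiv ℝ φ x) (fderiv ℝ (fderiv ℝ φ) q) q :=
    (hφ1.differentiable one_ne_zero q).hasFDerivAt
  have hcd := hc.clm_comp hd
  have heq : (fun y => (fderiv ℝ η (φ y)).comp (fderiv ℝ φ y))
      = fun _ : Ed d => ContinuousLinearMap.id ℝ (Ed d) := by
    funext y
    refine ContinuousLinearMap.ext fun v => ?_
    simpa using chain_BA hφ hη hli y v
  rw [heq] at hcd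
  have h0 := hcd.unique (hasFDerivAt_const _ _)
  have := congrArg (fun (L : Ed d →L[ℝ] (Ed d →L[ℝ] Ed d)) => L ξ ζ) h0
  simp only [ContinuousLinearMap.add_apply, ContinuousLinearMap.comp_apply,
    ContinuousLinearMap.compL_apply, ContinuousLinearMap.flip_apply,
    ContinuousLinearMap.zero_apply] at this
  rw [add_comm]
  exact this

end Aux

/-- Equivalence of invariance of the new control Lagrangian `L̃`, the new control
Hamiltonian `H̃`, and Pontryagin's control Hamiltonian `H₋₁`, under the lifted actions
of a `C²` base diffeomorphism `φ` (with fiber action `ψ` on controls) on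
`TT*Q ⊕ E`, `T*T*Q ⊕ E` and `T*TQ ⊕ E` respectively. -/
theorem invariance_newLagrangian_iff_newHamiltonian_iff_Pontryagin (d n : ℕ)
    (Xv : Ed d → Ed d → Ed n → Ed d)
    (C : Ed d → Ed d → Ed n → ℝ)
    (φ η : Ed d → Ed d)
    (hφ : ContDiff ℝ 2 φ) (hη : ContDiff ℝ 2 η)
    (hli : Function.LeftInverse η φ) (hri : Function.RightInverse η φ)
    (ψ : Ed d → Ed d → (Ed n →ₗ[ℝ] Ed n)) :
    let Dφ : Ed d → (Ed d →L[ℝ] Ed d) := fun a => fderiv ℝ φ a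
    let Dη : Ed d → (Ed d →L[ℝ] Ed d) := fun a => fderiv ℝ η a
    let D2φ : Ed d → (Ed d →L[ℝ] Ed d →L[ℝ] Ed d) := fun a => fderiv ℝ (fun x => fderiv ℝ φ x) a
    let D2η : Ed d → (Ed d →L[ℝ] Ed d →L[ℝ] Ed d) := fun a => fderiv ℝ (fun x => fderiv ℝ η x) a
    let Ltil : Ed d → Ed d → Ed d → Ed d → Ed n → ℝ := fun q κ vq vκ u =>
      ⟪vκ, vq⟫ + ⟪κ, Xv q vq u⟫ - C q vq u
    let Htil : Ed d → Ed d → Ed d → Ed d → Ed n → ℝ := fun q κ pq pκ u =>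
      ⟪pq, pκ⟫ - ⟪κ, Xv q pκ u⟫ + C q pκ u
    let Hm1 : Ed d → Ed d → Ed d → Ed d → Ed n → ℝ := fun q v lamq lamv u =>
      ⟪lamq, v⟫ + ⟪lamv, Xv q v u⟫ - C q v u
    -- (a) invariance of L̃ under the lifted action on TT*Q ⊕ E
    (((∀ (q κ vq vκ : Ed d) (u : Ed n),
        Ltil (φ q) (ContinuousLinearMap.adjoint (Dη (φ q)) κ) (Dφ q vq)
          (ContinuousLinearMap.adjoint ((D2η (φ q)) ((Dφ q) vq)) κ
            + ContinuousLinearMap.adjoint (Dη (φ q)) vκ)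
          (ψ q vq u)
        = Ltil q κ vq vκ u)
    ↔
    -- (b) invariance of H̃ under the lifted action on T*T*Q ⊕ E
    (∀ (q κ pq pκ : Ed d) (u : Ed n),
        Htil (φ q) (ContinuousLinearMap.adjoint (Dη (φ q)) κ)
          (ContinuousLinearMap.adjoint (Dη (φ q)) pq
            + ContinuousLinearMap.adjoint
                ((Dη (φ q)).comp ((((D2φ q).comp (Dη (φ q))).flip) pκ)) κ)
          (Dφ q pκ)
          (ψ q pκ u)
        = Htil q κ pq pκ u))
    ∧
    -- (a) ↔ (c) invariance of H₋₁ under the lifted action on T*TQ ⊕ E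
    ((∀ (q κ vq vκ : Ed d) (u : Ed n),
        Ltil (φ q) (ContinuousLinearMap.adjoint (Dη (φ q)) κ) (Dφ q vq)
          (ContinuousLinearMap.adjoint ((D2η (φ q)) ((Dφ q) vq)) κ
            + ContinuousLinearMap.adjoint (Dη (φ q)) vκ)
          (ψ q vq u)
        = Ltil q κ vq vκ u)
    ↔
    (∀ (q v lamq lamv : Ed d) (u : Ed n),
        Hm1 (φ q) (Dφ q v)
          (ContinuousLinearMap.adjoint (Dη (φ q)) lamq
            + ContinuousLinearMap.adjoint ((D2η (φ q)) ((Dφ q) v)) lamv)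
          (ContinuousLinearMap.adjoint (Dη (φ q)) lamv)
          (ψ q v u)
        = Hm1 q v lamq lamv u))) := by
  intro Dφ Dη D2φ D2η Ltil Htil Hm1
  have hBA : ∀ q v : Ed d, fderiv ℝ η (φ q) (fderiv ℝ φ q v) = v := chain_BA hφ hη hli
  have hSI := second_identity hφ hη hli
  -- the common reduced statement
  have haP : (∀ (q κ vq vκ : Ed d) (u : Ed n),
        Ltil (φ q) (ContinuousLinearMap.adjoint (Dη (φ q)) κ) (Dφ q vq)
          (ContinuousLinearMap.adjoint ((D2η (φ q)) ((Dφ q) vq)) κ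
            + ContinuousLinearMap.adjoint (Dη (φ q)) vκ)
          (ψ q vq u)
        = Ltil q κ vq vκ u)
      ↔ (∀ (q vq : Ed d) (u : Ed n) (κ : Ed d),
        ⟪κ, fderiv ℝ (fun x => fderiv ℝ η x) (φ q) (fderiv ℝ φ q vq) (fderiv ℝ φ q vq)⟫
        + ⟪κ, fderiv ℝ η (φ q) (Xv (φ q) (fderiv ℝ φ q vq) (ψ q vq u))⟫
        - C (φ q) (fderiv ℝ φ q vq) (ψ q vq u)
        = ⟪κ, Xv q vq u⟫ - C q vq u) := by
    constructor
    · intro h q vq u κ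
      have H := h q κ vq 0 u
      simp only [Ltil, Dφ, Dη, D2η, inner_add_left, ContinuousLinearMap.adjoint_inner_left,
        map_zero, add_zero, inner_zero_left, zero_add] at H
      linarith [H]
    · intro h q κ vq vκ u
      have H := h q vq u κ
      simp only [Ltil, Dφ, Dη, D2η, inner_add_left, ContinuousLinearMap.adjoint_inner_left]
      rw [hBA q vq]
      linarith [H]
  have hbP : (∀ (q κ pq pκ : Ed d) (u : Ed n),
        Htil (φ q) (ContinuousLinearMap.adjoint (Dη (φ q)) κ)
          (ContinuousLinearMap.adjoint (Dη (φ q)) pq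
            + ContinuousLinearMap.adjoint
                ((Dη (φ q)).comp ((((D2φ q).comp (Dη (φ q))).flip) pκ)) κ)
          (Dφ q pκ)
          (ψ q pκ u)
        = Htil q κ pq pκ u)
      ↔ (∀ (q vq : Ed d) (u : Ed n) (κ : Ed d),
        ⟪κ, fderiv ℝ (fun x => fderiv ℝ η x) (φ q) (fderiv ℝ φ q vq) (fderiv ℝ φ q vq)⟫
        + ⟪κ, fderiv ℝ η (φ q) (Xv (φ q) (fderiv ℝ φ q vq) (ψ q vq u))⟫
        - C (φ q) (fderiv ℝ φ q vq) (ψ q vq u)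
        = ⟪κ, Xv q vq u⟫ - C q vq u) := by
    have hkey : ∀ (q pκ : Ed d),
        fderiv ℝ η (φ q) (fderiv ℝ (fun x => fderiv ℝ φ x) q pκ pκ)
          = -(fderiv ℝ (fun x => fderiv ℝ η x) (φ q) (fderiv ℝ φ q pκ) (fderiv ℝ φ q pκ)) :=
      fun q pκ => eq_neg_of_add_eq_zero_right (hSI q pκ pκ)
    constructor
    · intro h q vq u κ
      have H := h q κ 0 vq u
      simp only [Htil, Dφ, Dη, D2φ, inner_add_left, ContinuousLinearMap.adjoint_inner_left,
        ContinuousLinearMap.comp_apply, ContinuousLinearMap.flip_apply,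
        map_zero, add_zero, inner_zero_left, zero_add] at H
      rw [hBA q vq, hkey q vq, inner_neg_right] at H
      linarith [H]
    · intro h q κ pq pκ u
      have H := h q pκ u κ
      simp only [Htil, Dφ, Dη, D2φ, inner_add_left, ContinuousLinearMap.adjoint_inner_left,
        ContinuousLinearMap.comp_apply, ContinuousLinearMap.flip_apply]
      rw [hBA q pκ, hkey q pκ, inner_neg_right]
      linarith [H]
  have hcP : (∀ (q v lamq lamv : Ed d) (u : Ed n),
        Hm1 (φ q) (Dφ q v)
          (ContinuousLinearMap.adjoint (Dη (φ q)) lamq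
            + ContinuousLinearMap.adjoint ((D2η (φ q)) ((Dφ q) v)) lamv)
          (ContinuousLinearMap.adjoint (Dη (φ q)) lamv)
          (ψ q v u)
        = Hm1 q v lamq lamv u)
      ↔ (∀ (q vq : Ed d) (u : Ed n) (κ : Ed d),
        ⟪κ, fderiv ℝ (fun x => fderiv ℝ η x) (φ q) (fderiv ℝ φ q vq) (fderiv ℝ φ q vq)⟫
        + ⟪κ, fderiv ℝ η (φ q) (Xv (φ q) (fderiv ℝ φ q vq) (ψ q vq u))⟫
        - C (φ q) (fderiv ℝ φ q vq) (ψ q vq u)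
        = ⟪κ, Xv q vq u⟫ - C q vq u) := by
    constructor
    · intro h q vq u κ
      have H := h q vq 0 κ u
      simp only [Hm1, Dφ, Dη, D2η, inner_add_left, ContinuousLinearMap.adjoint_inner_left,
        map_zero, add_zero, inner_zero_left, zero_add] at H
      linarith [H]
    · intro h q v lamq lamv u
      have H := h q v u lamv
      simp only [Hm1, Dφ, Dη, D2η, inner_add_left, ContinuousLinearMap.adjoint_inner_left]
      rw [hBA q v]
      linarith [H]
  exact ⟨haP.trans hbP.symm, haP.trans hcP.symm⟩
end
end

section
/- Let φ : ℝ^d → ℝ^d be a C² diffeomorphism with C² inverse η := φ⁻¹, and let ψ : ℝ^d × ℝ^d → (ℝ^n →ₗ ℝ^n) be a fiber action on controls. Assume the optimal control problem is symmetric, i.e. for all (q, v, u): C(φ(q), Dφ(q)v, ψ(q, v)u) = C(q, v, u) (invariant running cost) and X_v(φ(q), Dφ(q)v, ψ(q, v)u) = D²φ(q)(v, v) + Dφ(q)·X_v(q, v, u) (equivariant controlled SODE). Then the new control Lagrangian is invariant under the lifted action: L̃(φ(q), (Dη(φ(q)))ᵀκ, Dφ(q)v_q, (T_{v_q})ᵀκ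 + (Dη(φ(q)))ᵀv_κ, ψ(q, v_q)u) = L̃(q, κ, v_q, v_κ, u) for all (q, κ, v_q, v_κ, u), where T_{v_q} : ℝ^d → ℝ^d is the linear map z ↦ D²η(φ(q))(Dφ(q)v_q, z). -/
open scoped RealInnerProductSpace

noncomputable section

/-- If the optimal control problem is symmetric (the running cost `C` is invariant and
the controlled SODE `X_v` is equivariant under the action of a `C²` base diffeomorphism
`φ` with fiber action `ψ` on controls), then the new control Lagrangian `L̃` is
invariant under the lifted action on `TT*Q ⊕ E`. -/
theorem symmetric_OCP_implies_newLagrangian_invariant (d n : ℕ)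
    (Xv : Ed d → Ed d → Ed n → Ed d)
    (C : Ed d → Ed d → Ed n → ℝ)
    (φ η : Ed d → Ed d)
    (hφ : ContDiff ℝ 2 φ) (hη : ContDiff ℝ 2 η)
    (hli : Function.LeftInverse η φ) (hri : Function.RightInverse η φ)
    (ψ : Ed d → Ed d → (Ed n →ₗ[ℝ] Ed n))
    -- invariance of the running cost
    (hCinv : ∀ (q v : Ed d) (u : Ed n),
      C (φ q) (fderiv ℝ φ q v) (ψ q v u) = C q v u)
    -- equivariance of the controlled SODE
    (hXveq : ∀ (q v : Ed d) (u : Ed n),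
      Xv (φ q) (fderiv ℝ φ q v) (ψ q v u)
        = (fderiv ℝ (fun x => fderiv ℝ φ x) q v) v + fderiv ℝ φ q (Xv q v u)) :
    let Ltil : Ed d → Ed d → Ed d → Ed d → Ed n → ℝ := fun q κ vq vκ u =>
      ⟪vκ, vq⟫ + ⟪κ, Xv q vq u⟫ - C q vq u
    ∀ (q κ vq vκ : Ed d) (u : Ed n),
      Ltil (φ q) (ContinuousLinearMap.adjoint (fderiv ℝ η (φ q)) κ)
        (fderiv ℝ φ q vq)
        (ContinuousLinearMap.adjoint
            ((fderiv ℝ (fun x => fderiv ℝ η x) (φ q)) (fderiv ℝ φ q vq)) κ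
          + ContinuousLinearMap.adjoint (fderiv ℝ η (φ q)) vκ)
        (ψ q vq u)
      = Ltil q κ vq vκ u := by
  intro Ltil q κ vq vκ u
  have hφ1 : Differentiable ℝ φ := hφ.differentiable two_ne_zero
  have hη1 : Differentiable ℝ η := hη.differentiable two_ne_zero
  have hF : Differentiable ℝ (fderiv ℝ φ) :=
    (hφ.fderiv_right (m := 1) (by norm_num)).differentiable one_ne_zero
  have hA : Differentiable ℝ (fderiv ℝ η) :=
    (hη.fderiv_right (m := 1) (by norm_num)).differentiable one_ne_zero
  -- chain rule identity: Dη(φ x) ∘ Dφ x = id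
  have hcomp : ∀ x, (fderiv ℝ η (φ x)).comp (fderiv ℝ φ x)
      = ContinuousLinearMap.id ℝ (Ed d) := by
    intro x
    have h1 : fderiv ℝ (η ∘ φ) x = (fderiv ℝ η (φ x)).comp (fderiv ℝ φ x) :=
      fderiv_comp x (hη1 _) (hφ1 x)
    have h2 : (η ∘ φ) = id := funext hli
    rw [← h1, h2, fderiv_id]
  have hAF : ∀ x w, fderiv ℝ η (φ x) (fderiv ℝ φ x w) = w := by
    intro x w
    have := congrArg (fun L : Ed d →L[ℝ] Ed d => L w) (hcomp x)
    simpa using this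
  -- differentiate the constant map x ↦ Dη(φ x) ∘ Dφ x
  have key : (fderiv ℝ (fun x => fderiv ℝ η x) (φ q)) (fderiv ℝ φ q vq) (fderiv ℝ φ q vq)
      + fderiv ℝ η (φ q) ((fderiv ℝ (fun x => fderiv ℝ φ x) q vq) vq) = 0 := by
    have hc : HasFDerivAt (fun x => fderiv ℝ η (φ x))
        ((fderiv ℝ (fderiv ℝ η) (φ q)).comp (fderiv ℝ φ q)) q :=
      ((hA (φ q)).hasFDerivAt).comp q (hφ1 q).hasFDerivAt
    have hd : HasFDerivAt (fun x => fderiv ℝ φ x) (fderiv ℝ (fderiv ℝ φ) q) q :=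
      (hF q).hasFDerivAt
    have hg := hc.clm_comp hd
    have hg0 : HasFDerivAt (fun x => (fderiv ℝ η (φ x)).comp (fderiv ℝ φ x))
        (0 : Ed d →L[ℝ] (Ed d →L[ℝ] Ed d)) q := by
      have : (fun x => (fderiv ℝ η (φ x)).comp (fderiv ℝ φ x))
          = fun _ => ContinuousLinearMap.id ℝ (Ed d) := funext hcomp
      rw [this]
      exact hasFDerivAt_const _ _
    have heq := hg.unique hg0
    have := congrArg (fun L : Ed d →L[ℝ] (Ed d →L[ℝ] Ed d) => (L vq) vq) heq
    simp only [ContinuousLinearMap.add_apply, ContinuousLinearMap.comp_apply,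
      ContinuousLinearMap.compL_apply, ContinuousLinearMap.flip_apply,
      ContinuousLinearMap.zero_apply] at this
    linear_combination (norm := module) this
  simp only [Ltil, hCinv, hXveq, inner_add_left, inner_add_right,
    ContinuousLinearMap.adjoint_inner_left, map_add, hAF]
  have hz : (fderiv ℝ (fun x => fderiv ℝ η x) (φ q)) (fderiv ℝ φ q vq) (fderiv ℝ φ q vq)
      = - fderiv ℝ η (φ q) ((fderiv ℝ (fun x => fderiv ℝ φ x) q vq) vq) := by
    linear_combination (norm := module) key
  rw [hz]
  simp [inner_neg_right]
  ring
end
end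

section
/- (Noether's theorem for the optimal control problem.) Let Φ : ℝ × ℝ^d → ℝ^d be smooth with Φ(0, q) = q for all q, and let Ψ : ℝ × ℝ^d × ℝ^d × ℝ^n → ℝ^n be smooth with Ψ(0, q, v, u) = u. Assume that for all (s, q, v, u): C(Φ_s(q), D_qΦ_s(q)v, Ψ_s(q, v, u)) = C(q, v, u) and X_v(Φ_s(q), D_qΦ_s(q)v, Ψ_s(q, v, u)) = D_q²Φ_s(q)(v, v) + D_qΦ_s(q)·X_v(q, v, u). Let q, v, λ_q, λ_v : [0,T] → ℝ^d be C¹ and u : [0,T] → ℝ^n be continuous, satisfying on [0,T]: q̇ = v; v̇ = X_v(q, v, u); ⟨λ̇_q, w⟩ = D_1C(q,v,u)w − ⟨λ_v, D_1X_v(q,v,u)w⟩ and ⟨λ̇_v, w⟩ = D_2C(q,v,u)w − ⟨λ_v, D_2X_v(q,v,u)w⟩ − ⟨λ_q, w⟩ for all w ∈ ℝ^d; and D_3C(q,v,u)z = ⟨λ_v, D_3X_v(q,v,u)z⟩ for all z ∈ ℝ^n. Then the momentum map t ↦ ⟨λ_q(t), X(q(t))⟩ + ⟨λ_v(t), DX(q(t))·v(t)⟩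 is constant on [0,T], where X(q) := ∂_s Φ(s, q)|_{s=0} is the infinitesimal generator of Φ. -/
open scoped RealInnerProductSpace

noncomputable section

section aux
variable {E F G H : Type*} [NormedAddCommGroup E] [NormedSpace ℝ E]
  [NormedAddCommGroup F] [NormedSpace ℝ F] [NormedAddCommGroup G] [NormedSpace ℝ G]
  [NormedAddCommGroup H] [NormedSpace ℝ H]

lemma wtop1 : ((⊤ : ℕ∞) : WithTop ℕ∞) ≠ 0 := by simp

lemma wtopp1 : ((⊤ : ℕ∞) : WithTop ℕ∞) + 1 ≤ ((⊤ : ℕ∞) : WithTop ℕ∞) := by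
  exact_mod_cast le_top

lemma aux_slice_fderiv (g : ℝ × E → F) (hg : Differentiable ℝ g) (s : ℝ) (a : E) :
    HasFDerivAt (fun x => g (s, x))
      ((fderiv ℝ g (s, a)).comp (ContinuousLinearMap.inr ℝ ℝ E)) a :=
  (hg (s, a)).hasFDerivAt.comp a ((hasFDerivAt_const s a).prodMk (hasFDerivAt_id a))

lemma aux_slice_deriv (g : ℝ × E → F) (hg : Differentiable ℝ g) (s : ℝ) (a : E) :
    HasDerivAt (fun σ => g (σ, a)) (fderiv ℝ g (s, a) (1, 0)) s :=
  (hg (s, a)).hasFDerivAt.comp_hasDerivAt s ((hasDerivAt_id s).prodMk (hasDerivAt_const s a))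

lemma aux_partial1 (f : (E × F) × G → H) (hf : Differentiable ℝ f) (a : E) (b : F) (c : G)
    (w : E) : fderiv ℝ (fun x => f ((x, b), c)) a w = fderiv ℝ f ((a, b), c) ((w, 0), 0) := by
  have h2 : HasFDerivAt (fun x => f ((x, b), c))
      ((fderiv ℝ f ((a, b), c)).comp ((((ContinuousLinearMap.id ℝ E).prod 0).prod 0))) a :=
    (hf _).hasFDerivAt.comp a
      (((hasFDerivAt_id a).prodMk (hasFDerivAt_const b a)).prodMk (hasFDerivAt_const c a))
  rw [h2.fderiv]; rfl

lemma aux_partial2 (f : (E × F) × G → H) (hf : Differentiable ℝ f) (a : E) (b : F) (c : G)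
    (w : F) : fderiv ℝ (fun x => f ((a, x), c)) b w = fderiv ℝ f ((a, b), c) ((0, w), 0) := by
  have h2 : HasFDerivAt (fun x => f ((a, x), c))
      ((fderiv ℝ f ((a, b), c)).comp
        ((((0 : F →L[ℝ] E).prod (ContinuousLinearMap.id ℝ F)).prod 0))) b :=
    (hf _).hasFDerivAt.comp b
      (((hasFDerivAt_const a b).prodMk (hasFDerivAt_id b)).prodMk (hasFDerivAt_const c b))
  rw [h2.fderiv]; rfl

lemma aux_partial3 (f : (E × F) × G → H) (hf : Differentiable ℝ f) (a : E) (b : F) (c : G)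
    (w : G) : fderiv ℝ (fun x => f ((a, b), x)) c w = fderiv ℝ f ((a, b), c) ((0, 0), w) := by
  have h2 : HasFDerivAt (fun x => f ((a, b), x))
      ((fderiv ℝ f ((a, b), c)).comp
        ((0 : G →L[ℝ] E × F).prod (ContinuousLinearMap.id ℝ G))) c :=
    (hf _).hasFDerivAt.comp c ((hasFDerivAt_const (a, b) c).prodMk (hasFDerivAt_id c))
  rw [h2.fderiv]; rfl

lemma aux_symm (g : ℝ × E → F) (hg : ContDiff ℝ (⊤ : ℕ∞) g) (p : ℝ × E) (x y : ℝ × E) :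
    fderiv ℝ (fderiv ℝ g) p x y = fderiv ℝ (fderiv ℝ g) p y x :=
  second_derivative_symmetric (f := g)
    (fun z => ((hg.differentiable wtop1) z).hasFDerivAt)
    (((hg.fderiv_right wtopp1).differentiable wtop1) p).hasFDerivAt x y

end aux

set_option maxHeartbeats 2000000 in
/-- Noether's theorem for the optimal control problem: if the running cost is invariant
and the controlled SODE is equivariant under a one-parameter group of transformations
`Φ_s` of the base (with control action `Ψ_s`), then along any solution of the state,
adjoint and maximization conditions of Pontryagin's maximum principle, the momentum map
`t ↦ ⟪λ_q(t), X(q(t))⟫ + ⟪λ_v(t), DX(q(t))·v(t)⟫` is constant on `[0,T]`, where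
`X(q) = ∂_sΦ(s,q)|_{s=0}`. -/
theorem noether_OCP (d n : ℕ)
    (Xv : Ed d → Ed d → Ed n → Ed d)
    (C : Ed d → Ed d → Ed n → ℝ)
    (hXv : ContDiff ℝ (⊤ : ℕ∞) (fun p : (Ed d × Ed d) × Ed n => Xv p.1.1 p.1.2 p.2))
    (hC : ContDiff ℝ (⊤ : ℕ∞) (fun p : (Ed d × Ed d) × Ed n => C p.1.1 p.1.2 p.2))
    (Φ : ℝ → Ed d → Ed d)
    (hΦ : ContDiff ℝ (⊤ : ℕ∞) (fun p : ℝ × Ed d => Φ p.1 p.2))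
    (hΦ0 : ∀ a : Ed d, Φ 0 a = a)
    (Ψ : ℝ → Ed d → Ed d → Ed n → Ed n)
    (hΨ : ContDiff ℝ (⊤ : ℕ∞)
      (fun p : (ℝ × (Ed d × Ed d)) × Ed n => Ψ p.1.1 p.1.2.1 p.1.2.2 p.2))
    (hΨ0 : ∀ (a b : Ed d) (c : Ed n), Ψ 0 a b c = c)
    -- invariance of the running cost
    (hCinv : ∀ (s : ℝ) (a b : Ed d) (c : Ed n),
      C (Φ s a) (fderiv ℝ (Φ s) a b) (Ψ s a b c) = C a b c)
    -- equivariance of the controlled SODE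
    (hXveq : ∀ (s : ℝ) (a b : Ed d) (c : Ed n),
      Xv (Φ s a) (fderiv ℝ (Φ s) a b) (Ψ s a b c)
        = (fderiv ℝ (fun x => fderiv ℝ (Φ s) x) a b) b + fderiv ℝ (Φ s) a (Xv a b c))
    (T : ℝ) (hT : 0 < T)
    (q v lamq lamv : ℝ → Ed d) (u : ℝ → Ed n)
    (hq : ContDiff ℝ 1 q) (hv : ContDiff ℝ 1 v)
    (hlamq : ContDiff ℝ 1 lamq) (hlamv : ContDiff ℝ 1 lamv)
    (hu : Continuous u)
    -- state dynamics
    (hstate : ∀ t ∈ Set.Icc (0 : ℝ) T,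
      deriv q t = v t ∧ deriv v t = Xv (q t) (v t) (u t))
    -- adjoint dynamics
    (hadj : ∀ t ∈ Set.Icc (0 : ℝ) T, ∀ w : Ed d,
      ⟪deriv lamq t, w⟫ =
          fderiv ℝ (fun x => C x (v t) (u t)) (q t) w
            - ⟪lamv t, fderiv ℝ (fun x => Xv x (v t) (u t)) (q t) w⟫ ∧
      ⟪deriv lamv t, w⟫ =
          fderiv ℝ (fun x => C (q t) x (u t)) (v t) w
            - ⟪lamv t, fderiv ℝ (fun x => Xv (q t) x (u t)) (v t) w⟫
            - ⟪lamq t, w⟫)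
    -- maximization condition
    (hmax : ∀ t ∈ Set.Icc (0 : ℝ) T, ∀ z : Ed n,
      fderiv ℝ (fun x => C (q t) (v t) x) (u t) z =
        ⟪lamv t, fderiv ℝ (fun x => Xv (q t) (v t) x) (u t) z⟫) :
    -- conclusion: conservation of the momentum map
    let Xgen : Ed d → Ed d := fun a => deriv (fun s => Φ s a) 0
    ∀ t₁ ∈ Set.Icc (0 : ℝ) T, ∀ t₂ ∈ Set.Icc (0 : ℝ) T,
      ⟪lamq t₁, Xgen (q t₁)⟫ + ⟪lamv t₁, fderiv ℝ Xgen (q t₁) (v t₁)⟫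
        = ⟪lamq t₂, Xgen (q t₂)⟫ + ⟪lamv t₂, fderiv ℝ Xgen (q t₂) (v t₂)⟫ := by
  intro Xgen t₁ ht₁ t₂ ht₂
  classical
  -- shorthand for the full maps
  set Cf : (Ed d × Ed d) × Ed n → ℝ := fun p => C p.1.1 p.1.2 p.2 with hCfdef
  set Xf : (Ed d × Ed d) × Ed n → Ed d := fun p => Xv p.1.1 p.1.2 p.2 with hXfdef
  set Pf : (ℝ × (Ed d × Ed d)) × Ed n → Ed n :=
    fun p => Ψ p.1.1 p.1.2.1 p.1.2.2 p.2 with hPfdef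
  have hCd : Differentiable ℝ Cf := hC.differentiable wtop1
  have hXfd : Differentiable ℝ Xf := hXv.differentiable wtop1
  have hPd : Differentiable ℝ Pf := hΨ.differentiable wtop1
  set F : ℝ × Ed d → Ed d := fun p => Φ p.1 p.2 with hFdef
  have hF : ContDiff ℝ (⊤ : ℕ∞) F := hΦ
  have hFd : Differentiable ℝ F := hF.differentiable wtop1
  set D1 : ℝ × Ed d → (ℝ × Ed d) →L[ℝ] Ed d := fderiv ℝ F with hD1def
  have hD1 : ContDiff ℝ (⊤ : ℕ∞) D1 := hF.fderiv_right wtopp1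
  have hD1d : Differentiable ℝ D1 := hD1.differentiable wtop1
  set D2 := fderiv ℝ D1 with hD2def
  have hD2 : ContDiff ℝ (⊤ : ℕ∞) D2 := hD1.fderiv_right wtopp1
  have hD2d : Differentiable ℝ D2 := hD2.differentiable wtop1
  set D3 := fderiv ℝ D2 with hD3def
  set ir := ContinuousLinearMap.inr ℝ ℝ (Ed d) with hirdef
  -- partial derivative of `Φ s` in the space variable
  have hpd : ∀ (s : ℝ) (a : Ed d), HasFDerivAt (Φ s) ((D1 (s, a)).comp ir) a :=
    fun s a => aux_slice_fderiv F hFd s a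
  have hfd : ∀ (s : ℝ) (a b : Ed d), fderiv ℝ (Φ s) a b = D1 (s, a) (0, b) := by
    intro s a b; rw [(hpd s a).fderiv]; rfl
  -- the generator and its derivatives
  set Xg : Ed d → Ed d := fun a => D1 (0, a) (1, 0) with hXgdef
  have hXgen : Xgen = Xg := funext fun a => (aux_slice_deriv F hFd 0 a).deriv
  have hXg : ContDiff ℝ (⊤ : ℕ∞) Xg :=
    (hD1.comp (contDiff_const.prodMk contDiff_id)).clm_apply contDiff_const
  have hXgd : Differentiable ℝ Xg := hXg.differentiable wtop1
  set M := fderiv ℝ Xg with hMdef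
  have hM : ContDiff ℝ (⊤ : ℕ∞) M := hXg.fderiv_right wtopp1
  have hMd : Differentiable ℝ M := hM.differentiable wtop1
  -- pointwise formula for M
  have hXgFD : ∀ a : Ed d,
      HasFDerivAt Xg (((D2 (0, a)).comp ir).flip ((1 : ℝ), (0 : Ed d))) a := by
    intro a
    have h2 := (aux_slice_fderiv D1 hD1d 0 a).clm_apply
      (hasFDerivAt_const ((1 : ℝ), (0 : Ed d)) a)
    simpa using h2
  have hMb : ∀ a b : Ed d, M a b = D2 (0, a) (0, b) (1, 0) := by
    intro a b; rw [hMdef, (hXgFD a).fderiv]; rfl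
  -- symmetry of second and third derivatives
  have symD2 : ∀ p x y : ℝ × Ed d, D2 p x y = D2 p y x := fun p x y => aux_symm F hF p x y
  have symD3a : ∀ p x y : ℝ × Ed d, D3 p x y = D3 p y x := fun p x y => aux_symm D1 hD1 p x y
  have hD2app : ∀ (p : ℝ × Ed d) (y z : ℝ × Ed d),
      HasFDerivAt (fun w => D2 w y z) ((((D3 p).flip y).flip z)) p := by
    intro p y z
    have h := ((hD2d p).hasFDerivAt.clm_apply (hasFDerivAt_const y p)).clm_apply
      (hasFDerivAt_const z p)
    simpa using h
  have symD3b : ∀ p x y z : ℝ × Ed d, D3 p x y z = D3 p x z y := by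
    intro p x y z
    have e1 : (fun w => D2 w y z) = fun w => D2 w z y := funext fun w => symD2 w y z
    have h1 := (hD2app p y z).fderiv
    have h2 := (hD2app p z y).fderiv
    rw [e1] at h1
    have h3 := h1.symm.trans h2
    have h4 := congrFun (congrArg DFunLike.coe h3) x
    simpa using h4
  -- pointwise formula for fderiv M
  have hfdM : ∀ a b b' : Ed d, fderiv ℝ M a b b' = D3 (0, a) (0, b) (0, b') (1, 0) := by
    intro a b b'
    have hrw : (fun x => M x b') = fun x : Ed d => D2 (0, x) (0, b') (1, 0) :=
      funext fun x => hMb x b'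
    have w1 : HasFDerivAt (fun x : Ed d => D2 (0, x) (0, b') (1, 0))
        (((((D3 (0, a)).comp ir).flip ((0 : ℝ), b')).flip ((1 : ℝ), (0 : Ed d)))) a := by
      have h := ((aux_slice_fderiv D2 hD2d 0 a).clm_apply
        (hasFDerivAt_const ((0 : ℝ), b') a)).clm_apply
        (hasFDerivAt_const ((1 : ℝ), (0 : Ed d)) a)
      simpa using h
    have w2 : HasFDerivAt (fun x : Ed d => M x b') ((fderiv ℝ M a).flip b') a := by
      have h := (hMd a).hasFDerivAt.clm_apply (hasFDerivAt_const b' a)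
      simpa using h
    rw [hrw] at w2
    have h5 := w2.unique w1
    have h6 := congrFun (congrArg DFunLike.coe h5) b
    simpa [hirdef] using h6
  -- derivative in `s` of `s ↦ fderiv (Φ s) a b` at `s = 0`
  have hadfd : ∀ a b : Ed d, HasDerivAt (fun s => fderiv ℝ (Φ s) a b) (M a b) 0 := by
    intro a b
    have hrw : (fun s => fderiv ℝ (Φ s) a b) = fun s => D1 (s, a) (0, b) :=
      funext fun s => hfd s a b
    have h : HasDerivAt (fun s => D1 (s, a) (0, b)) (D2 (0, a) (1, 0) (0, b)) 0 := by
      have h0 := (aux_slice_deriv D1 hD1d 0 a).clm_apply (hasDerivAt_const (0 : ℝ) ((0 : ℝ), b))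
      simpa using h0
    have he : D2 (0, a) (1, 0) (0, b) = M a b := by rw [hMb a b, symD2]
    rw [hrw]; exact he ▸ h
  have hadflow : ∀ a : Ed d, HasDerivAt (fun s => Φ s a) (Xg a) 0 :=
    fun a => aux_slice_deriv F hFd 0 a
  -- derivative of the control action
  set ζ : Ed d → Ed d → Ed n → Ed n :=
    fun a b c => fderiv ℝ Pf ((0, (a, b)), c) ((1, (0, 0)), 0) with hζdef
  have hadpsi : ∀ (a b : Ed d) (c : Ed n), HasDerivAt (fun s => Ψ s a b c) (ζ a b c) 0 := by
    intro a b c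
    have hcurve : HasDerivAt (fun s : ℝ => (((s, (a, b)), c) : (ℝ × (Ed d × Ed d)) × Ed n))
        (((1 : ℝ), ((0 : Ed d), (0 : Ed d))), (0 : Ed n)) 0 :=
      ((hasDerivAt_id 0).prodMk (hasDerivAt_const 0 (a, b))).prodMk (hasDerivAt_const 0 c)
    exact (hPd _).hasFDerivAt.comp_hasDerivAt 0 hcurve
  -- second space derivative term
  have hfd2 : ∀ (s : ℝ) (a b : Ed d),
      fderiv ℝ (fun x => fderiv ℝ (Φ s) x) a b b = D2 (s, a) (0, b) (0, b) := by
    intro s a b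
    have hrw : (fun x : Ed d => fderiv ℝ (Φ s) x) = fun x => (D1 (s, x)).comp ir :=
      funext fun x => (hpd s x).fderiv
    have h1 := (aux_slice_fderiv D1 hD1d s a).clm_comp (hasFDerivAt_const ir a)
    rw [hrw, h1.fderiv]
    simp only [ContinuousLinearMap.add_apply, ContinuousLinearMap.comp_apply,
      ContinuousLinearMap.flip_apply, ContinuousLinearMap.comp_zero,
      ContinuousLinearMap.zero_apply, zero_add, ContinuousLinearMap.compL_apply]
    rw [← hD2def]
    rfl
  have hadD2 : ∀ a b : Ed d,
      HasDerivAt (fun s => D2 (s, a) (0, b) (0, b)) (fderiv ℝ M a b b) 0 := by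
    intro a b
    have h : HasDerivAt (fun s => D2 (s, a) (0, b) (0, b))
        (D3 (0, a) (1, 0) (0, b) (0, b)) 0 := by
      have h0 := ((aux_slice_deriv D2 hD2d 0 a).clm_apply
        (hasDerivAt_const (0 : ℝ) ((0 : ℝ), b))).clm_apply
        (hasDerivAt_const (0 : ℝ) ((0 : ℝ), b))
      simpa using h0
    have he : D3 (0, a) (1, 0) (0, b) (0, b) = fderiv ℝ M a b b := by
      rw [symD3a (0, a) (1, 0) (0, b), symD3b (0, a) (0, b) (1, 0) (0, b), hfdM a b b]
    exact he ▸ h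
  -- value of `Φ 0`
  have hΦ0' : Φ 0 = fun x : Ed d => x := funext hΦ0
  have hfd0 : ∀ a b : Ed d, fderiv ℝ (Φ 0) a b = b := by
    intro a b; rw [hΦ0', fderiv_id']; rfl
  -- the two differentiated invariance identities
  have key : ∀ (a b : Ed d) (c : Ed n),
      (fderiv ℝ Cf ((a, b), c)) ((Xg a, M a b), ζ a b c) = 0 ∧
      (fderiv ℝ Xf ((a, b), c)) ((Xg a, M a b), ζ a b c)
        = fderiv ℝ M a b b + M a (Xv a b c) := by
    intro a b c
    have hγ : HasDerivAt
        (fun s => (((Φ s a, fderiv ℝ (Φ s) a b), Ψ s a b c) : (Ed d × Ed d) × Ed n))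
        ((Xg a, M a b), ζ a b c) 0 :=
      ((hadflow a).prodMk (hadfd a b)).prodMk (hadpsi a b c)
    have hpt : (((a, b), c) : (Ed d × Ed d) × Ed n)
        = ((Φ 0 a, fderiv ℝ (Φ 0) a b), Ψ 0 a b c) := by
      rw [hΦ0 a, hΨ0 a b c, hfd0 a b]
    have hLC : HasDerivAt (fun s => C (Φ s a) (fderiv ℝ (Φ s) a b) (Ψ s a b c))
        ((fderiv ℝ Cf ((a, b), c)) ((Xg a, M a b), ζ a b c)) 0 :=
      (hCd _).hasFDerivAt.comp_hasDerivAt_of_eq 0 hγ hpt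
    have hconstC : HasDerivAt (fun s => C (Φ s a) (fderiv ℝ (Φ s) a b) (Ψ s a b c)) 0 0 := by
      have hrw : (fun s => C (Φ s a) (fderiv ℝ (Φ s) a b) (Ψ s a b c))
          = fun _ => C a b c := funext fun s => hCinv s a b c
      rw [hrw]; exact hasDerivAt_const 0 _
    have h1 := hLC.unique hconstC
    have hterm1 : HasDerivAt (fun s => (fderiv ℝ (fun x => fderiv ℝ (Φ s) x) a b) b)
        (fderiv ℝ M a b b) 0 := by
      have hrw : (fun s => (fderiv ℝ (fun x => fderiv ℝ (Φ s) x) a b) b)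
          = fun s => D2 (s, a) (0, b) (0, b) := funext fun s => hfd2 s a b
      rw [hrw]; exact hadD2 a b
    have hRHS : HasDerivAt
        (fun s => (fderiv ℝ (fun x => fderiv ℝ (Φ s) x) a b) b + fderiv ℝ (Φ s) a (Xv a b c))
        (fderiv ℝ M a b b + M a (Xv a b c)) 0 := hterm1.add (hadfd a (Xv a b c))
    have hLX : HasDerivAt (fun s => Xv (Φ s a) (fderiv ℝ (Φ s) a b) (Ψ s a b c))
        ((fderiv ℝ Xf ((a, b), c)) ((Xg a, M a b), ζ a b c)) 0 :=
      (hXfd _).hasFDerivAt.comp_hasDerivAt_of_eq 0 hγ hpt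
    have hconstX : HasDerivAt (fun s => Xv (Φ s a) (fderiv ℝ (Φ s) a b) (Ψ s a b c))
        (fderiv ℝ M a b b + M a (Xv a b c)) 0 := by
      have hrw : (fun s => Xv (Φ s a) (fderiv ℝ (Φ s) a b) (Ψ s a b c))
          = fun s => (fderiv ℝ (fun x => fderiv ℝ (Φ s) x) a b) b
              + fderiv ℝ (Φ s) a (Xv a b c) := funext fun s => hXveq s a b c
      rw [hrw]; exact hRHS
    exact ⟨h1, hLX.unique hconstX⟩
  -- vector splitting
  have hvecsplit : ∀ (x y : Ed d) (z : Ed n),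
      (((x, y), z) : (Ed d × Ed d) × Ed n) = ((x, 0), 0) + ((0, y), 0) + ((0, 0), z) := by
    intro x y z
    simp [Prod.ext_iff]
  -- zero derivative of the momentum map on [0, T]
  have hJder : ∀ t ∈ Set.Icc (0 : ℝ) T,
      HasDerivAt (fun τ => ⟪lamq τ, Xg (q τ)⟫ + ⟪lamv τ, M (q τ) (v τ)⟫) 0 t := by
    intro t ht
    obtain ⟨hs1, hs2⟩ := hstate t ht
    have hqd : HasDerivAt q (v t) t := by
      have h := ((hq.differentiable one_ne_zero) t).hasDerivAt; rwa [hs1] at h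
    have hvd : HasDerivAt v (Xv (q t) (v t) (u t)) t := by
      have h := ((hv.differentiable one_ne_zero) t).hasDerivAt; rwa [hs2] at h
    have hlamqd : HasDerivAt lamq (deriv lamq t) t := ((hlamq.differentiable one_ne_zero) t).hasDerivAt
    have hlamvd : HasDerivAt lamv (deriv lamv t) t := ((hlamv.differentiable one_ne_zero) t).hasDerivAt
    have hXq : HasDerivAt (fun τ => Xg (q τ)) (M (q t) (v t)) t :=
      (hXgd (q t)).hasFDerivAt.comp_hasDerivAt t hqd
    have hMder : HasDerivAt (fun τ => M (q τ)) (fderiv ℝ M (q t) (v t)) t :=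
      (hMd (q t)).hasFDerivAt.comp_hasDerivAt t hqd
    have hMq : HasDerivAt (fun τ => M (q τ) (v τ))
        (fderiv ℝ M (q t) (v t) (v t) + M (q t) (Xv (q t) (v t) (u t))) t :=
      hMder.clm_apply hvd
    have hJ := (hlamqd.inner ℝ hXq).add (hlamvd.inner ℝ hMq)
    have hzero : (⟪lamq t, M (q t) (v t)⟫ + ⟪deriv lamq t, Xg (q t)⟫)
        + (⟪lamv t, fderiv ℝ M (q t) (v t) (v t) + M (q t) (Xv (q t) (v t) (u t))⟫
            + ⟪deriv lamv t, M (q t) (v t)⟫) = 0 := by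
      -- abbreviations
      have hA1 : fderiv ℝ (fun x => C x (v t) (u t)) (q t) (Xg (q t))
          = fderiv ℝ Cf ((q t, v t), u t) ((Xg (q t), 0), 0) :=
        aux_partial1 Cf hCd (q t) (v t) (u t) (Xg (q t))
      have hA2 : fderiv ℝ (fun x => C (q t) x (u t)) (v t) (M (q t) (v t))
          = fderiv ℝ Cf ((q t, v t), u t) ((0, M (q t) (v t)), 0) :=
        aux_partial2 Cf hCd (q t) (v t) (u t) (M (q t) (v t))
      have hA3 : fderiv ℝ (fun x => C (q t) (v t) x) (u t) (ζ (q t) (v t) (u t))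
          = fderiv ℝ Cf ((q t, v t), u t) ((0, 0), ζ (q t) (v t) (u t)) :=
        aux_partial3 Cf hCd (q t) (v t) (u t) (ζ (q t) (v t) (u t))
      have hB1 : fderiv ℝ (fun x => Xv x (v t) (u t)) (q t) (Xg (q t))
          = fderiv ℝ Xf ((q t, v t), u t) ((Xg (q t), 0), 0) :=
        aux_partial1 Xf hXfd (q t) (v t) (u t) (Xg (q t))
      have hB2 : fderiv ℝ (fun x => Xv (q t) x (u t)) (v t) (M (q t) (v t))
          = fderiv ℝ Xf ((q t, v t), u t) ((0, M (q t) (v t)), 0) :=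
        aux_partial2 Xf hXfd (q t) (v t) (u t) (M (q t) (v t))
      have hB3 : fderiv ℝ (fun x => Xv (q t) (v t) x) (u t) (ζ (q t) (v t) (u t))
          = fderiv ℝ Xf ((q t, v t), u t) ((0, 0), ζ (q t) (v t) (u t)) :=
        aux_partial3 Xf hXfd (q t) (v t) (u t) (ζ (q t) (v t) (u t))
      -- split the differentiated invariance identities
      have kC := (key (q t) (v t) (u t)).1
      have kX := (key (q t) (v t) (u t)).2
      rw [hvecsplit (Xg (q t)) (M (q t) (v t)) (ζ (q t) (v t) (u t))] at kC kX
      simp only [map_add] at kC kX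
      -- adjoint and maximization conditions
      have f1 := (hadj t ht (Xg (q t))).1
      have f2 := (hadj t ht (M (q t) (v t))).2
      have f3 := hmax t ht (ζ (q t) (v t) (u t))
      rw [hA1, hB1] at f1
      rw [hA2, hB2] at f2
      rw [hA3, hB3] at f3
      -- expand the inner product of the equivariance identity
      have f5 : ⟪lamv t, fderiv ℝ M (q t) (v t) (v t) + M (q t) (Xv (q t) (v t) (u t))⟫
          = ⟪lamv t, fderiv ℝ Xf ((q t, v t), u t) ((Xg (q t), 0), 0)⟫
            + ⟪lamv t, fderiv ℝ Xf ((q t, v t), u t) ((0, M (q t) (v t)), 0)⟫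
            + ⟪lamv t, fderiv ℝ Xf ((q t, v t), u t) ((0, 0), ζ (q t) (v t) (u t))⟫ := by
        rw [← kX, inner_add_right, inner_add_right]
      linarith
    exact hzero ▸ hJ
  -- the momentum map is constant on [0, T]
  have c1 : Continuous fun τ => Xg (q τ) := hXg.continuous.comp hq.continuous
  have c2 : Continuous fun τ => M (q τ) (v τ) :=
    (hM.continuous.comp hq.continuous).clm_apply hv.continuous
  have hcontJ : ContinuousOn (fun τ => ⟪lamq τ, Xg (q τ)⟫ + ⟪lamv τ, M (q τ) (v τ)⟫)
      (Set.Icc 0 T) :=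
    ((hlamq.continuous.inner c1).add (hlamv.continuous.inner c2)).continuousOn
  have hconst := constant_of_has_deriv_right_zero hcontJ
    (fun x hx => (hJder x (Set.mem_Icc_of_Ico hx)).hasDerivWithinAt)
  have goal1 := hconst t₁ ht₁
  have goal2 := hconst t₂ ht₂
  rw [hXgen]
  rw [← hMdef]
  exact goal1.trans goal2.symm
end
end

section
/- Assume full actuation n = d. Let X_v : ℝ^d × ℝ^d × ℝ^d → ℝ^d and C : ℝ^d × ℝ^d × ℝ^d → ℝ be C¹, and let u : ℝ^d × ℝ^d × ℝ^d → ℝ^d be a C¹ map satisfying X_v(q, v, u(q, v, a)) = a for all (q, v, a). Fix (q, v, a) and suppose the partial derivative D_3X_v(q, v, u(q, v, a)) : ℝ^d → ℝ^d is an invertible linear map. Define the associated second-order Lagrangian 𝓛(q, v, a) := C(q, v, u(q, v, a)). Then D_3𝓛(q, v, a) = D_3C(q, v, u(q, v, a)) ∘ (D_3X_v(q, v, u(q, v, a)))⁻¹ as linear functionals on ℝ^d; in particular, if λ_v ∈ ℝ^d satisfies the maximization condition D_3C(q, v, u(q, v, a))z = ⟨λ_v, D_3X_v(q, v, u(q,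 v, a))z⟩ for all z ∈ ℝ^d, then D_3𝓛(q, v, a)w = ⟨λ_v, w⟩ for all w ∈ ℝ^d. -/
open scoped RealInnerProductSpace

noncomputable section

/-- Fully actuated case (`n = d`). For the second-order Lagrangian
`𝓛(q, v, a) = C(q, v, u(q, v, a))` associated to the OCP, where `u(q,v,a)` inverts the
controlled SODE in the control slot, one has
`D₃𝓛(q,v,a) = D₃C(q,v,u(q,v,a)) ∘ (D₃X_v(q,v,u(q,v,a)))⁻¹` as linear functionals; in
particular if `λ_v` satisfies the maximization condition then `D₃𝓛(q,v,a) = ⟪λ_v, ·⟫`. -/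
theorem fiber_derivative_second_order_lagrangian (d : ℕ)
    (Xv : Ed d → Ed d → Ed d → Ed d)
    (C : Ed d → Ed d → Ed d → ℝ)
    (hXv : ContDiff ℝ 1 (fun p : (Ed d × Ed d) × Ed d => Xv p.1.1 p.1.2 p.2))
    (hC : ContDiff ℝ 1 (fun p : (Ed d × Ed d) × Ed d => C p.1.1 p.1.2 p.2))
    (umap : Ed d → Ed d → Ed d → Ed d)
    (humap : ContDiff ℝ 1 (fun p : (Ed d × Ed d) × Ed d => umap p.1.1 p.1.2 p.2))
    (hinv : ∀ q v a : Ed d, Xv q v (umap q v a) = a)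
    (q v a : Ed d)
    (hbij : Function.Bijective ⇑(fderiv ℝ (fun z => Xv q v z) (umap q v a))) :
    -- D₃𝓛 = D₃C ∘ (D₃X_v)⁻¹ as linear functionals on ℝ^d
    (∀ w : Ed d,
      fderiv ℝ (fun a' => C q v (umap q v a')) a w
        = fderiv ℝ (fun z => C q v z) (umap q v a)
            ((Equiv.ofBijective _ hbij).symm w)) ∧
    -- consequence: the maximization condition identifies D₃𝓛 with ⟪λ_v, ·⟫
    (∀ lamv : Ed d,
      (∀ z : Ed d,
          fderiv ℝ (fun z' => C q v z') (umap q v a) z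
            = ⟪lamv, fderiv ℝ (fun z' => Xv q v z') (umap q v a) z⟫) →
      ∀ w : Ed d, fderiv ℝ (fun a' => C q v (umap q v a')) a w = ⟪lamv, w⟫) := by
  -- slice differentiability
  have hι : Differentiable ℝ (fun z : Ed d => (((q, v), z) : (Ed d × Ed d) × Ed d)) :=
    (differentiable_const _).prodMk differentiable_id
  have hF : Differentiable ℝ (fun z => Xv q v z) :=
    (hXv.differentiable one_ne_zero).comp hι
  have hG : Differentiable ℝ (fun z => C q v z) :=
    (hC.differentiable one_ne_zero).comp hι
  have hU : Differentiable ℝ (fun a' => umap q v a') :=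
    (humap.differentiable one_ne_zero).comp hι
  set F := fun z => Xv q v z with hFdef
  set G := fun z => C q v z with hGdef
  set U := fun a' => umap q v a' with hUdef
  -- chain rule for F ∘ U = id
  have hFU : F ∘ U = id := by
    funext a'; exact hinv q v a'
  have hchain : ∀ w : Ed d, fderiv ℝ F (U a) (fderiv ℝ U a w) = w := by
    intro w
    have h1 : fderiv ℝ (F ∘ U) a = (fderiv ℝ F (U a)).comp (fderiv ℝ U a) :=
      fderiv_comp a (hF (U a)) (hU a)
    have h2 : fderiv ℝ (F ∘ U) a = ContinuousLinearMap.id ℝ (Ed d) := by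
      rw [hFU]; exact fderiv_id
    have := congrArg (fun L : Ed d →L[ℝ] Ed d => L w) (h2.symm.trans h1)
    simpa using this.symm
  -- fderiv U a w = (Equiv.ofBijective _).symm w
  have hUeq : ∀ w : Ed d, fderiv ℝ U a w = (Equiv.ofBijective _ hbij).symm w := by
    intro w
    apply hbij.injective
    rw [hchain w]
    exact (Equiv.ofBijective_apply_symm_apply _ hbij w).symm
  -- chain rule for G ∘ U
  have hGU : ∀ w : Ed d,
      fderiv ℝ (fun a' => C q v (umap q v a')) a w = fderiv ℝ G (U a) (fderiv ℝ U a w) := by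
    intro w
    have h1 : fderiv ℝ (G ∘ U) a = (fderiv ℝ G (U a)).comp (fderiv ℝ U a) :=
      fderiv_comp a (hG (U a)) (hU a)
    have : (fun a' => C q v (umap q v a')) = G ∘ U := rfl
    rw [this, h1]; rfl
  constructor
  · intro w
    rw [hGU w, hUeq w]
  · intro lamv hmax w
    rw [hGU w, hmax (fderiv ℝ U a w), hchain w]
end
end
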